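/- arXiv:1702.04678 — 8 statements merged into one kernel-verified Lean document; each statement's English description precedes it below -/
import Mathlib

section
/- Let 0 < ν ≤ 1 and N ∈ ℕ. There exists a constant C = C(ν, N) > 0 with the following property: for every N × N complex matrix 𝖠 with spectrum {λ₁, …, λ_r} ordered so that Re λ₁ ≤ … ≤ Re λ_r, with V_j ⊆ ℂ^N the generalized eigenspace of 𝖠 for λ_j and, for 1 ≤ k ≤ r, 𝖯_k : ℂ^N → ⊕_{j≤k} V_j the projection along ⊕_{j>k} V_j, if 1 ≤ k ≤ r − 1 and Re λ_{k+1} − Re λ_k ≥ ν, then ‖𝖯_k‖ ≤ C (1 + ‖𝖠‖)^N. -/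
/-!
The projection `P` is a polynomial in `A`. Split the roots of the characteristic polynomial,
with multiplicity, into the nodes `L` left of the gap and `R` right of it. Any `q` with
`q ≡ 1 mod ∏_{l ∈ L} (X - l)` and `q ≡ 0 mod ∏_{r ∈ R} (X - r)` satisfies `q(A) = P` on every
generalized eigenspace, and Neville's recursion
`q_{l::L, r::R} = ((X - l) q_{L, r::R} - (X - r) q_{l::L, R}) / (r - l)` produces one.
Its denominators have modulus at least `ν` since `l` and `r` lie on opposite sides of the gap,
and `‖A - z‖ ≤ 2 ‖A‖` at every eigenvalue `z`, so each of the at most `N` steps of the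
recursion costs a factor `4 (1 + ‖A‖) / ν`.
-/

open Polynomial

namespace SpectralProjection

variable {K : Type*} [Field K]

noncomputable def nodalPoly (L : List K) : K[X] :=
  (L.map (X - C ·)).prod

@[simp]
theorem nodalPoly_nil : nodalPoly ([] : List K) = 1 := rfl

@[simp]
theorem nodalPoly_cons (l : K) (L : List K) : nodalPoly (l :: L) = (X - C l) * nodalPoly L := by
  simp [nodalPoly]

noncomputable def separatingPoly : List K → List K → K[X]
  | _, [] => 1
  | [], _ :: _ => 0
  | l :: L, r :: R =>
    C (r - l)⁻¹ * ((X - C l) * separatingPoly L (r :: R) - (X - C r) * separatingPoly (l :: L) R)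

theorem nodalPoly_dvd_separatingPoly (L R : List K) :
    nodalPoly R ∣ separatingPoly L R := by
  induction L, R using separatingPoly.induct with
  | case1 L => simp
  | case2 r R => simp [separatingPoly]
  | case3 l L r R ih₁ ih₂ =>
    rw [separatingPoly]
    refine dvd_mul_of_dvd_right (dvd_sub (dvd_mul_of_dvd_right ih₁ _) ?_) _
    rw [nodalPoly_cons]
    exact mul_dvd_mul_left _ ih₂

theorem nodalPoly_dvd_separatingPoly_sub_one {L R : List K} (hLR : ∀ l ∈ L, ∀ r ∈ R, l ≠ r) :
    nodalPoly L ∣ separatingPoly L R - 1 := by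
  induction L, R using separatingPoly.induct with
  | case1 L => simp [separatingPoly]
  | case2 r R => simp [separatingPoly]
  | case3 l L r R ih₁ ih₂ =>
    have hlr : r - l ≠ 0 := sub_ne_zero.2 (hLR l (by simp) r (by simp)).symm
    have key : separatingPoly (l :: L) (r :: R) - 1 = C (r - l)⁻¹ *
        ((X - C l) * (separatingPoly L (r :: R) - 1) -
          (X - C r) * (separatingPoly (l :: L) R - 1)) := by
      rw [separatingPoly]
      have : C (r - l)⁻¹ * (C r - C l) = (1 : K[X]) := by
        rw [← C_sub, ← C_mul, inv_mul_cancel₀ hlr, C_1]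
      linear_combination this
    rw [key]
    refine dvd_mul_of_dvd_right (dvd_sub ?_ (dvd_mul_of_dvd_right (ih₂ ?_) _)) _
    · rw [nodalPoly_cons]
      exact mul_dvd_mul_left _ (ih₁ fun l' hl' r' hr' => hLR l' (by simp [hl']) r' hr')
    · exact fun l' hl' r' hr' => hLR l' hl' r' (by simp [hr'])

theorem norm_aeval_separatingPoly_le {𝕜 𝒜 : Type*} [NormedField 𝕜] [NormedRing 𝒜]
    [NormedAlgebra 𝕜 𝒜] [NormOneClass 𝒜] (a : 𝒜) {L R : List 𝕜} {M ν : ℝ} (hν : 0 < ν)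
    (hνM : ν ≤ 2 * M) (hM : ∀ z ∈ L ++ R, ‖a - algebraMap 𝕜 𝒜 z‖ ≤ M)
    (hsep : ∀ l ∈ L, ∀ r ∈ R, ν ≤ ‖r - l‖) :
    ‖aeval a (separatingPoly L R)‖ ≤ (2 * M / ν) ^ (L.length + R.length) := by
  have hB : 1 ≤ 2 * M / ν := by rwa [one_le_div hν]
  induction L, R using separatingPoly.induct with
  | case1 L => simpa [separatingPoly] using one_le_pow₀ hB
  | case2 r R => simpa [separatingPoly] using pow_nonneg (zero_le_one.trans hB) _
  | case3 l L r R ih₁ ih₂ =>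
    have h₁ := ih₁ (fun z hz => hM z (by simp at hz ⊢; tauto))
      (fun l' hl' r' hr' => hsep l' (by simp [hl']) r' hr')
    have h₂ := ih₂ (fun z hz => hM z (by simp at hz ⊢; tauto))
      (fun l' hl' r' hr' => hsep l' hl' r' (by simp [hr']))
    simp only [List.length_cons, ← add_assoc, add_right_comm _ 1 R.length] at h₁ h₂ ⊢
    set n := L.length + R.length
    set B := 2 * M / ν
    rw [separatingPoly, map_mul, aeval_C, ← Algebra.smul_def, norm_smul, norm_inv]
    simp only [map_sub, map_mul, aeval_X, aeval_C]
    calc ‖r - l‖⁻¹ * ‖(a - algebraMap 𝕜 𝒜 l) * aeval a (separatingPoly L (r :: R)) -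
          (a - algebraMap 𝕜 𝒜 r) * aeval a (separatingPoly (l :: L) R)‖
        ≤ ν⁻¹ * (M * B ^ (n + 1) + M * B ^ (n + 1)) := by
          gcongr
          · exact hsep l (by simp) r (by simp)
          · refine (norm_sub_le _ _).trans (add_le_add ?_ ?_) <;> refine (norm_mul_le _ _).trans ?_
            · exact mul_le_mul (hM l (by simp)) h₁ (norm_nonneg _) (by linarith)
            · exact mul_le_mul (hM r (by simp)) h₂ (norm_nonneg _) (by linarith)
      _ = B ^ (n + 1 + 1) := by
          rw [pow_succ B (n + 1)]
          simp only [B]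
          ring

theorem aeval_apply_eq_zero_of_isCoprime {R M : Type*} [CommRing R] [AddCommGroup M] [Module R M]
    (f : Module.End R M) {p q g : R[X]} (hpq : aeval f (p * q) = 0) (hgq : IsCoprime g q)
    {v : M} (hv : aeval f g v = 0) : aeval f p v = 0 := by
  refine Submodule.disjoint_def.1 (disjoint_ker_aeval_of_isCoprime f hgq) _ ?_ ?_
  · rw [LinearMap.mem_ker, ← Module.End.mul_apply, ← map_mul, mul_comm, map_mul,
      Module.End.mul_apply, hv, map_zero]
  · rw [LinearMap.mem_ker, ← Module.End.mul_apply, ← map_mul, mul_comm, hpq, LinearMap.zero_apply]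

theorem isCoprime_X_sub_C_pow_nodalPoly {μ : K} {R : List K} (hμ : μ ∉ R) (m : ℕ) :
    IsCoprime ((X - C μ) ^ m) (nodalPoly R) := by
  refine IsCoprime.pow_left ?_
  induction R with
  | nil => exact nodalPoly_nil (K := K) ▸ isCoprime_one_right
  | cons r R ih =>
    rw [List.mem_cons, not_or] at hμ
    rw [nodalPoly_cons]
    exact (isCoprime_X_sub_C_of_isUnit_sub (sub_ne_zero.2 hμ.1).isUnit).mul_right (ih hμ.2)

section Endomorphism

variable {V : Type*} [AddCommGroup V] [Module K V] {f : Module.End K V} {L R : List K}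

theorem aeval_nodalPoly_apply_eq_zero (hf : aeval f (nodalPoly L * nodalPoly R) = 0)
    {μ : K} (hμ : μ ∉ R) {v : V} (hv : v ∈ f.maxGenEigenspace μ) :
    aeval f (nodalPoly L) v = 0 := by
  obtain ⟨k, hk⟩ := (Module.End.mem_maxGenEigenspace f μ v).1 hv
  refine aeval_apply_eq_zero_of_isCoprime f hf (isCoprime_X_sub_C_pow_nodalPoly hμ k) ?_
  rwa [map_pow, map_sub, aeval_X, aeval_C, Algebra.algebraMap_eq_smul_one]

theorem aeval_separatingPoly_apply_of_notMem_right
    (hf : aeval f (nodalPoly L * nodalPoly R) = 0)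
    (hLR : ∀ l ∈ L, ∀ r ∈ R, l ≠ r) {μ : K} (hμ : μ ∉ R) {v : V} (hv : v ∈ f.maxGenEigenspace μ) :
    aeval f (separatingPoly L R) v = v := by
  obtain ⟨g, hg⟩ := nodalPoly_dvd_separatingPoly_sub_one hLR
  have h : aeval f (separatingPoly L R - 1) v = 0 := by
    rw [hg, mul_comm, map_mul, Module.End.mul_apply, aeval_nodalPoly_apply_eq_zero hf hμ hv,
      map_zero]
  simpa [sub_eq_zero] using h

theorem aeval_separatingPoly_apply_of_notMem_left
    (hf : aeval f (nodalPoly L * nodalPoly R) = 0)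
    {μ : K} (hμ : μ ∉ L) {v : V} (hv : v ∈ f.maxGenEigenspace μ) :
    aeval f (separatingPoly L R) v = 0 := by
  obtain ⟨g, hg⟩ := nodalPoly_dvd_separatingPoly L R
  rw [hg, mul_comm, map_mul, Module.End.mul_apply,
    aeval_nodalPoly_apply_eq_zero (mul_comm (nodalPoly L) _ ▸ hf) hμ hv, map_zero]

theorem eq_aeval_separatingPoly [IsAlgClosed K] [FiniteDimensional K V] {P : Module.End K V}
    (hf : aeval f (nodalPoly L * nodalPoly R) = 0)
    (hLR : ∀ l ∈ L, ∀ r ∈ R, l ≠ r)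
    (hL : ∀ μ ∈ L, ∀ v ∈ f.maxGenEigenspace μ, P v = v)
    (hR : ∀ μ ∈ R, ∀ v ∈ f.maxGenEigenspace μ, P v = 0) :
    P = aeval f (separatingPoly L R) := by
  have h : ⨆ μ, f.maxGenEigenspace μ ≤ LinearMap.eqLocus P (aeval f (separatingPoly L R)) := by
    refine iSup_le fun μ v hv => ?_
    rw [LinearMap.mem_eqLocus]
    by_cases hμL : μ ∈ L
    · have hμR : μ ∉ R := fun hμR => hLR μ hμL μ hμR rfl
      rw [hL μ hμL v hv, aeval_separatingPoly_apply_of_notMem_right hf hLR hμR hv]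
    by_cases hμR : μ ∈ R
    · rw [hR μ hμR v hv, aeval_separatingPoly_apply_of_notMem_left hf hμL hv]
    · obtain rfl : v = 0 := (aeval_separatingPoly_apply_of_notMem_right hf hLR hμR hv).symm.trans
        (aeval_separatingPoly_apply_of_notMem_left hf hμL hv)
      simp only [map_zero]
  rw [Module.End.iSup_maxGenEigenspace_eq_top] at h
  exact LinearMap.ext fun v => h Submodule.mem_top

end Endomorphism

theorem nodalPoly_roots_filter_mul_nodalPoly_roots_filter_not [IsAlgClosed K] {p : K[X]}
    (hp : p.Monic) (q : K → Prop) [DecidablePred q] :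
    nodalPoly (p.roots.filter q).toList * nodalPoly (p.roots.filter (¬ q ·)).toList = p := by
  have h (s : Multiset K) : nodalPoly s.toList = (s.map (X - C ·)).prod := by
    rw [nodalPoly, ← Multiset.prod_coe, ← Multiset.map_coe, Multiset.coe_toList]
  rw [h, h, ← Multiset.prod_add, ← Multiset.map_add, Multiset.filter_add_not,
    prod_multiset_X_sub_C_of_monic_of_roots_card_eq hp IsAlgClosed.card_roots_eq_natDegree]

theorem _root_.ContinuousLinearMap.coe_aeval {𝕜 E : Type*} [NormedField 𝕜]
    [NormedAddCommGroup E] [NormedSpace 𝕜 E] (A : E →L[𝕜] E) (p : 𝕜[X]) :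
    ((aeval A p : E →L[𝕜] E) : Module.End 𝕜 E) = aeval (A : Module.End 𝕜 E) p := by
  induction p using Polynomial.induction_on' with
  | add p q hp hq => simp [hp, hq]
  | monomial n a => simp; rfl

theorem norm_sub_algebraMap_le_of_mem_spectrum {𝕜 𝒜 : Type*} [NormedField 𝕜] [NormedRing 𝒜]
    [NormedAlgebra 𝕜 𝒜] [CompleteSpace 𝒜] [NormOneClass 𝒜] {a : 𝒜} {z : 𝕜} (hz : z ∈ spectrum 𝕜 a) :
    ‖a - algebraMap 𝕜 𝒜 z‖ ≤ 2 * ‖a‖ := by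
  calc ‖a - algebraMap 𝕜 𝒜 z‖ ≤ ‖a‖ + ‖z‖ := (norm_sub_le _ _).trans_eq (by rw [norm_algebraMap'])
    _ ≤ 2 * ‖a‖ := by linarith [spectrum.norm_le_norm_of_mem hz]

theorem norm_le_of_re_gap {E : Type*} [NormedAddCommGroup E] [NormedSpace ℂ E]
    [FiniteDimensional ℂ E] (A P : E →L[ℂ] E) {t ν : ℝ} (hν : 0 < ν) (hν4 : ν ≤ 4)
    (hgap : ∀ μ ∈ spectrum ℂ A, μ.re ≤ t ∨ t + ν ≤ μ.re)
    (hleft : ∀ μ ∈ spectrum ℂ A, μ.re ≤ t →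
      ∀ v ∈ Module.End.maxGenEigenspace (A : Module.End ℂ E) μ, P v = v)
    (hright : ∀ μ ∈ spectrum ℂ A, t < μ.re →
      ∀ v ∈ Module.End.maxGenEigenspace (A : Module.End ℂ E) μ, P v = 0) :
    ‖P‖ ≤ (4 * (1 + ‖A‖) / ν) ^ Module.finrank ℂ E := by
  rcases subsingleton_or_nontrivial E with hE | hE
  · rw [Subsingleton.elim P 0, norm_zero]; positivity
  set χ := (A : Module.End ℂ E).charpoly
  set L := (χ.roots.filter (·.re ≤ t)).toList
  set R := (χ.roots.filter (¬ ·.re ≤ t)).toList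
  have hspec : ∀ z ∈ χ.roots, z ∈ spectrum ℂ A := fun z hz => by
    rw [ContinuousLinearMap.spectrum_eq, Module.End.mem_spectrum_iff_isRoot_charpoly]
    exact isRoot_of_mem_roots hz
  have hL : ∀ l ∈ L, l ∈ spectrum ℂ A ∧ l.re ≤ t := fun l hl => by
    rw [Multiset.mem_toList, Multiset.mem_filter] at hl
    exact ⟨hspec l hl.1, hl.2⟩
  have hR : ∀ r ∈ R, r ∈ spectrum ℂ A ∧ t + ν ≤ r.re := fun r hr => by
    rw [Multiset.mem_toList, Multiset.mem_filter] at hr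
    exact ⟨hspec r hr.1, (hgap r (hspec r hr.1)).resolve_left hr.2⟩
  have hsep : ∀ l ∈ L, ∀ r ∈ R, ν ≤ ‖r - l‖ := fun l hl r hr =>
    (by linarith [(hL l hl).2, (hR r hr).2, Complex.sub_re r l] : ν ≤ (r - l).re).trans
      (Complex.re_le_norm _)
  have hP : P = aeval A (separatingPoly L R) := ContinuousLinearMap.coe_injective <| by
    rw [ContinuousLinearMap.coe_aeval]
    refine eq_aeval_separatingPoly ?_ (fun l hl r hr h => ?_)
      (fun μ hμ => hleft μ (hL μ hμ).1 (hL μ hμ).2)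
      (fun μ hμ => hright μ (hR μ hμ).1 (by linarith [(hR μ hμ).2]))
    · rw [nodalPoly_roots_filter_mul_nodalPoly_roots_filter_not (LinearMap.charpoly_monic _),
        LinearMap.aeval_self_charpoly]
    · have := hsep l hl r hr
      rw [h, sub_self, norm_zero] at this
      linarith
  have hlen : L.length + R.length ≤ Module.finrank ℂ E := by
    rw [Multiset.length_toList, Multiset.length_toList, ← Multiset.card_add,
      Multiset.filter_add_not, ← LinearMap.charpoly_natDegree]
    exact card_roots' χ
  have hM : ∀ z ∈ L ++ R, ‖A - algebraMap ℂ _ z‖ ≤ 2 * (1 + ‖A‖) := fun z hz => by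
    have hz : z ∈ spectrum ℂ A :=
      (List.mem_append.1 hz).elim (fun h => (hL z h).1) (fun h => (hR z h).1)
    linarith [norm_sub_algebraMap_le_of_mem_spectrum hz]
  have hB : 1 ≤ 4 * (1 + ‖A‖) / ν := by rw [one_le_div hν]; linarith [norm_nonneg A]
  rw [hP]
  calc ‖aeval A (separatingPoly L R)‖ ≤ (2 * (2 * (1 + ‖A‖)) / ν) ^ (L.length + R.length) :=
        norm_aeval_separatingPoly_le A hν (by linarith [norm_nonneg A]) hM hsep
    _ ≤ (4 * (1 + ‖A‖) / ν) ^ Module.finrank ℂ E := by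
        rw [← mul_assoc, show (2 : ℝ) * 2 = 4 by norm_num]
        exact pow_le_pow_right₀ hB hlen

theorem maxGenEigenspace_eq_ker_pow_finrank {E : Type*} [NormedAddCommGroup E] [NormedSpace ℂ E]
    [FiniteDimensional ℂ E] (A : E →L[ℂ] E) (μ : ℂ) :
    Module.End.maxGenEigenspace (A : Module.End ℂ E) μ =
      LinearMap.ker
        (((A - μ • (1 : E →L[ℂ] E)) ^ Module.finrank ℂ E : E →L[ℂ] E) : Module.End ℂ E) := by
  rw [Module.End.maxGenEigenspace_eq_genEigenspace_finrank, Module.End.genEigenspace_nat]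
  simp

end SpectralProjection

open SpectralProjection in
/-- Harish-Chandra style uniform bound for spectral projections (cf. [geoc, Lemma 6.4]).
For `0 < ν ≤ 1` and `N ∈ ℕ` there is a constant `C > 0` such that for every endomorphism `𝖠`
of the Hermitian space `ℂ^N` with eigenvalues `λ₁, …, λ_r` ordered by increasing real part,
if `Re λ_{k+1} − Re λ_k ≥ ν` for some `1 ≤ k ≤ r − 1`, then the projection onto the sum of the
generalized eigenspaces of `λ₁, …, λ_k` along the sum of the remaining generalized eigenspaces
has operator norm at most `C (1 + ‖𝖠‖)^N`. -/
theorem spectral_projection_uniform_bound (ν : ℝ) (hν0 : 0 < ν) (hν1 : ν ≤ 1) (N : ℕ) :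
    ∃ C > (0 : ℝ),
      ∀ (A : EuclideanSpace ℂ (Fin N) →L[ℂ] EuclideanSpace ℂ (Fin N))
        (r : ℕ) (lam : Fin r → ℂ),
        Function.Injective lam →
        Set.range lam = spectrum ℂ A →
        Monotone (fun j : Fin r => (lam j).re) →
        ∀ k : ℕ, 1 ≤ k → k ≤ r - 1 →
        (∀ (hk : k < r) (hk' : k - 1 < r), ν ≤ (lam ⟨k, hk⟩).re - (lam ⟨k - 1, hk'⟩).re) →
        ∀ P : EuclideanSpace ℂ (Fin N) →L[ℂ] EuclideanSpace ℂ (Fin N),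
          (∀ v ∈ ⨆ j : Fin r, ⨆ _ : (j : ℕ) < k,
              LinearMap.ker (((A - lam j • (1 : EuclideanSpace ℂ (Fin N) →L[ℂ] EuclideanSpace ℂ (Fin N))) ^ N :
                EuclideanSpace ℂ (Fin N) →L[ℂ] EuclideanSpace ℂ (Fin N)) : EuclideanSpace ℂ (Fin N) →ₗ[ℂ] EuclideanSpace ℂ (Fin N)),
            P v = v) →
          (∀ v ∈ ⨆ j : Fin r, ⨆ _ : k ≤ (j : ℕ),
              LinearMap.ker (((A - lam j • (1 : EuclideanSpace ℂ (Fin N) →L[ℂ] EuclideanSpace ℂ (Fin N))) ^ N :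
                EuclideanSpace ℂ (Fin N) →L[ℂ] EuclideanSpace ℂ (Fin N)) : EuclideanSpace ℂ (Fin N) →ₗ[ℂ] EuclideanSpace ℂ (Fin N)),
            P v = 0) →
          ‖P‖ ≤ C * (1 + ‖A‖) ^ N := by
  refine ⟨(4 / ν) ^ N, by positivity, ?_⟩
  intro A r lam _ hran hmono k hk1 hkr hgap P hPL hPR
  have hk : k < r := by omega
  have hk' : k - 1 < r := by omega
  set t := (lam ⟨k - 1, hk'⟩).re
  have hlow : ∀ j : Fin r, (j : ℕ) < k → (lam j).re ≤ t := fun j hj =>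
    hmono (Fin.mk_le_mk.2 (by omega) : j ≤ ⟨k - 1, hk'⟩)
  have hhigh : ∀ j : Fin r, k ≤ (j : ℕ) → t + ν ≤ (lam j).re := fun j hj => by
    linarith [hgap hk hk', hmono (Fin.mk_le_mk.2 hj : (⟨k, hk⟩ : Fin r) ≤ j)]
  have hker (j : Fin r) := finrank_euclideanSpace_fin (𝕜 := ℂ) (n := N) ▸
    maxGenEigenspace_eq_ker_pow_finrank A (lam j)
  calc ‖P‖ ≤ (4 * (1 + ‖A‖) / ν) ^ Module.finrank ℂ (EuclideanSpace ℂ (Fin N)) := by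
        refine norm_le_of_re_gap A P (t := t) hν0 (by linarith) ?_ ?_ ?_ <;> rw [← hran]
        · rintro _ ⟨j, rfl⟩
          rcases lt_or_ge (j : ℕ) k with hj | hj
          exacts [.inl (hlow j hj), .inr (hhigh j hj)]
        · rintro _ ⟨j, rfl⟩ hj v hv
          refine hPL v (Submodule.mem_iSup_of_mem j (Submodule.mem_iSup_of_mem ?_ (hker j ▸ hv)))
          by_contra! h
          linarith [hhigh j h]
        · rintro _ ⟨j, rfl⟩ hj v hv
          refine hPR v (Submodule.mem_iSup_of_mem j (Submodule.mem_iSup_of_mem ?_ (hker j ▸ hv)))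
          by_contra! h
          linarith [hlow j h]
    _ = (4 / ν) ^ N * (1 + ‖A‖) ^ N := by
        rw [finrank_euclideanSpace_fin, ← mul_pow]; ring
end

section
/- Let n ∈ ℕ, let p₁, …, p_n : ℝ → ℂ be polynomial functions, and let ν₁, …, ν_n be pairwise distinct real numbers. If the exponential polynomial P(t) = Σ_{j=1}^n p_j(t) e^{i ν_j t} satisfies lim_{t→+∞} P(t) = 0, then P is identically zero; equivalently, every polynomial p_j is the zero polynomial. -/
/-!
Sampling at `t = N h`, with `h > 0` so small that the numbers `l_j = e^{i ν_j h}` stay distinct,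
turns the hypothesis into `∑ q_j(N) l_j^N → 0` with `q_j = p_j(h X)` and `|l_j| = 1`.
This discrete statement follows by induction on the number of terms. The operator
`f(N) ↦ f(N+1) / l_0 - f(N)` preserves the limit and replaces `q_j` by
`(l_j / l_0) q_j(X + 1) - q_j`: for `j ≠ 0` this is injective, while for `j = 0` it is the
forward difference, so `deg q_0 + 1` applications remove the first term and the induction
hypothesis kills the others. What remains is `q_0(N) l_0^N → 0`, which forces `q_0 = 0`.
-/

open Filter Polynomial Topology Real

namespace Polynomial

variable {R : Type*} [CommRing R]

lemma eval_taylor_sub_one_pow (s : R) (k : ℕ) (r : R[X]) :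
    (((taylor s - 1) ^ k) r).eval = (fwdDiff s)^[k] r.eval := by
  induction k generalizing r with
  | zero => rfl
  | succ k ih =>
    funext x
    rw [pow_succ', Module.End.mul_apply, Function.iterate_succ_apply', ← ih]
    simp [fwdDiff, taylor_eval]

lemma taylor_one_sub_one_pow_natDegree_succ [IsDomain R] [Infinite R] (r : R[X]) :
    ((taylor (1 : R) - 1) ^ (r.natDegree + 1)) r = 0 :=
  Polynomial.funext fun x => by
    rw [eval_zero, congrFun (eval_taylor_sub_one_pow 1 _ r) x]
    exact congrFun r.fwdDiff_iter_degree_add_one_eq_zero x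

lemma eq_zero_of_smul_taylor_eq_self [IsDomain R] {a : R} (ha : a ≠ 1) {s : R} {r : R[X]}
    (h : a • taylor s r = r) : r = 0 := by
  have hlc : a * r.leadingCoeff = r.leadingCoeff := by
    simpa [coeff_taylor_natDegree] using congrArg (coeff · r.natDegree) h
  have : (a - 1) * r.leadingCoeff = 0 := by rw [sub_mul, hlc, one_mul, sub_self]
  exact leadingCoeff_eq_zero.mp ((mul_eq_zero.mp this).resolve_left (sub_ne_zero.mpr ha))

lemma eq_zero_of_tendsto_eval_natCast (q : ℂ[X])
    (h : Tendsto (fun N : ℕ => q.eval (N : ℂ)) atTop (𝓝 0)) : q = 0 := by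
  by_cases hdeg : 0 < q.degree
  · have hnat : Tendsto (fun N : ℕ => ‖(N : ℂ)‖) atTop atTop := by
      simpa using tendsto_natCast_atTop_atTop (R := ℝ)
    exact absurd h.norm (not_tendsto_nhds_of_tendsto_atTop (q.tendsto_norm_atTop hdeg hnat) _)
  · rw [eq_C_of_degree_le_zero (not_lt.mp hdeg)] at h ⊢
    simp only [eval_C] at h
    rw [tendsto_const_nhds_iff.mp h, C_0]

end Polynomial

def expPolySeq {n : ℕ} (q : Fin n → ℂ[X]) (l : Fin n → ℂ) (N : ℕ) : ℂ :=
  ∑ j, (q j).eval (N : ℂ) * l j ^ N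

lemma expPolySeq_succ {n : ℕ} (q : Fin (n + 1) → ℂ[X]) (l : Fin (n + 1) → ℂ) (N : ℕ) :
    expPolySeq q l N =
      (q 0).eval (N : ℂ) * l 0 ^ N + expPolySeq (fun j => q j.succ) (fun j => l j.succ) N :=
  Fin.sum_univ_succ _

lemma expPolySeq_taylor_sub {n : ℕ} (q : Fin n → ℂ[X]) (l : Fin n → ℂ) (c : ℂ) (N : ℕ) :
    expPolySeq (fun j => (l j / c) • taylor 1 (q j) - q j) l N =
      c⁻¹ * expPolySeq q l (N + 1) - expPolySeq q l N := by
  simp only [expPolySeq, Finset.mul_sum, ← Finset.sum_sub_distrib, eval_sub, eval_smul,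
    taylor_eval, smul_eq_mul, Nat.cast_succ]
  refine Finset.sum_congr rfl fun j _ => ?_
  ring

lemma tendsto_expPolySeq_taylor_sub {n : ℕ} {q : Fin n → ℂ[X]} {l : Fin n → ℂ}
    (h : Tendsto (expPolySeq q l) atTop (𝓝 0)) (c : ℂ) :
    Tendsto (expPolySeq (fun j => (l j / c) • taylor 1 (q j) - q j) l) atTop (𝓝 0) := by
  simp only [funext (expPolySeq_taylor_sub q l c)]
  simpa using ((h.comp (tendsto_add_atTop_nat 1)).const_mul c⁻¹).sub h

lemma eq_zero_of_tendsto_eval_mul_pow (q : ℂ[X]) {l : ℂ} (hl : 1 ≤ ‖l‖)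
    (h : Tendsto (fun N : ℕ => q.eval (N : ℂ) * l ^ N) atTop (𝓝 0)) : q = 0 := by
  refine q.eq_zero_of_tendsto_eval_natCast
    (squeeze_zero_norm (fun N => ?_) (tendsto_zero_iff_norm_tendsto_zero.mp h))
  rw [norm_mul, norm_pow]
  exact le_mul_of_one_le_right (norm_nonneg _) (one_le_pow₀ hl)

theorem eq_zero_of_tendsto_expPolySeq {n : ℕ} (q : Fin n → ℂ[X]) (l : Fin n → ℂ)
    (hl : ∀ j, 1 ≤ ‖l j‖) (hinj : Function.Injective l)
    (h : Tendsto (expPolySeq q l) atTop (𝓝 0)) : ∀ j, q j = 0 := by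
  induction n with
  | zero => exact fun j => j.elim0
  | succ n ih =>
    have hl0 : l 0 ≠ 0 := norm_pos_iff.mp (one_pos.trans_le (hl 0))
    have htail : ∀ (k : ℕ) (q : Fin (n + 1) → ℂ[X]), ((taylor (1 : ℂ) - 1) ^ k) (q 0) = 0 →
        Tendsto (expPolySeq q l) atTop (𝓝 0) → ∀ j : Fin n, q j.succ = 0 := by
      intro k
      induction k with
      | zero =>
        intro q hq0 h
        refine ih _ _ (fun j => hl j.succ) (hinj.comp (Fin.succ_injective n)) ?_
        convert h using 1
        funext N
        simp [expPolySeq_succ q, show q 0 = 0 from hq0]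
      | succ k ihk =>
        intro q hq0 h j
        refine eq_zero_of_smul_taylor_eq_self (a := l j.succ / l 0) (s := 1) ?_ (sub_eq_zero.mp ?_)
        · exact (div_eq_one_iff_eq hl0).not.mpr (hinj.ne (Fin.succ_ne_zero j))
        · refine ihk _ ?_ (tendsto_expPolySeq_taylor_sub h (l 0)) j
          simpa [div_self hl0, pow_succ] using hq0
    have hsucc := htail _ q (taylor_one_sub_one_pow_natDegree_succ (q 0)) h
    have h0 : q 0 = 0 :=
      eq_zero_of_tendsto_eval_mul_pow (q 0) (hl 0) (by
        convert h using 1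
        funext N
        rw [expPolySeq_succ]
        simp [expPolySeq, hsucc])
    exact Fin.cases h0 hsucc

lemma exists_pos_forall_abs_mul_lt {ι : Type*} [Finite ι] (ν : ι → ℝ) {ε : ℝ} (hε : 0 < ε) :
    ∃ h > 0, ∀ j, |ν j * h| < ε := by
  have hsmall : ∀ᶠ h in 𝓝[>] (0 : ℝ), ∀ j, |ν j * h| < ε := by
    refine eventually_all.2 fun j => nhdsWithin_le_nhds ?_
    have hcont : Tendsto (fun h : ℝ => |ν j * h|) (𝓝 0) (𝓝 0) := by
      simpa using ((continuous_const.mul continuous_id).abs.tendsto (0 : ℝ))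
    exact hcont.eventually (gt_mem_nhds hε)
  obtain ⟨h, hlt, hpos⟩ := (hsmall.and self_mem_nhdsWithin).exists
  exact ⟨h, hpos, hlt⟩

open Complex in
lemma injective_cexp_I_mul_mul {ι : Type*} {ν : ι → ℝ} (hν : Function.Injective ν) {h : ℝ}
    (hh : h ≠ 0) (hsmall : ∀ j, |ν j * h| < π) :
    Function.Injective fun j => cexp (I * ν j * h) := by
  intro j k hjk
  have him : ∀ j, (I * ν j * h).im = ν j * h := fun j => by simp
  have hbounds : ∀ j, -π < (I * ν j * h).im ∧ (I * ν j * h).im ≤ π := fun j => by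
    rw [him]; exact ⟨(abs_lt.mp (hsmall j)).1, (abs_lt.mp (hsmall j)).2.le⟩
  have := congrArg im (exp_inj_of_neg_pi_lt_of_le_pi (hbounds j).1 (hbounds j).2
    (hbounds k).1 (hbounds k).2 hjk)
  rw [him, him] at this
  exact hν (mul_right_cancel₀ hh this)

/-- If an exponential polynomial `P(t) = Σ_j p_j(t) e^{i ν_j t}` with unitary characters
(pairwise distinct real `ν_j`) tends to `0` as `t → +∞`, then it vanishes identically;
equivalently, every polynomial `p_j` is zero. -/
theorem exppoly_unitary_tendsto_zero_eq_zero
    (n : ℕ) (p : Fin n → Polynomial ℂ) (ν : Fin n → ℝ)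
    (hν : Function.Injective ν)
    (hlim : Tendsto
      (fun t : ℝ => ∑ j : Fin n, (p j).eval (t : ℂ) * Complex.exp (Complex.I * (ν j : ℂ) * (t : ℂ)))
      atTop (nhds 0)) :
    (∀ t : ℝ, ∑ j : Fin n, (p j).eval (t : ℂ) * Complex.exp (Complex.I * (ν j : ℂ) * (t : ℂ)) = 0)
      ∧ ∀ j, p j = 0 := by
  obtain ⟨h, hpos, hsmall⟩ := exists_pos_forall_abs_mul_lt ν pi_pos
  set l : Fin n → ℂ := fun j => Complex.exp (Complex.I * ν j * h)
  have hl : ∀ j, 1 ≤ ‖l j‖ := fun j => by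
    simp only [l, mul_assoc, ← Complex.ofReal_mul, Complex.norm_exp_I_mul_ofReal, le_refl]
  have hsample : Tendsto (expPolySeq (fun j => (p j).comp (C (h : ℂ) * X)) l) atTop (𝓝 0) := by
    refine (hlim.comp (tendsto_natCast_atTop_atTop.atTop_mul_const hpos)).congr fun N => ?_
    refine Finset.sum_congr rfl fun j _ => ?_
    simp only [l, eval_comp, eval_mul, eval_C, eval_X, ← Complex.exp_nat_mul]
    push_cast
    ring_nf
  have hp : ∀ j, p j = 0 := fun j =>
    (comp_C_mul_X_eq_zero_iff (by simpa using hpos.ne')).mp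
      (eq_zero_of_tendsto_expPolySeq _ l hl (injective_cexp_I_mul_mul hν hpos.ne' hsmall) hsample j)
  exact ⟨fun t => by simp [hp], hp⟩
end

section
/- Let U be a finite-dimensional complex normed vector space, A ∈ End(U) and ρ ∈ ℝ. Let w ∈ U belong to the sum of the generalized eigenspaces ker(A − μ)^{dim U} of A taken over the eigenvalues μ of A with Re μ = ρ. If e^{−ρ t} e^{tA} w → 0 as t → +∞, then w = 0. -/
/-!
Write `w = ∑ w_μ` with `w_μ ∈ ker (A - μ)^n` and `Re μ = ρ`. The generalized eigenspaces are
independent and invariant under `e^{tA}`, and in finite dimension the projection onto one of them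
along the others is continuous, so each `e^{-ρt} e^{tA} w_μ` tends to `0` separately.
On a single generalized eigenspace argue by descending induction on `k` with `(A - μ)^k v = 0`:
`u = (A - μ)^(k-1) v` is an eigenvector, so `‖e^{-ρt} e^{tA} u‖ = ‖e^{t(μ - ρ)}‖ ‖u‖ = ‖u‖` is
constant, while `e^{-ρt} e^{tA} u = (A - μ)^(k-1) (e^{-ρt} e^{tA} v) → 0`. Hence `u = 0`.
-/

open Filter Topology

theorem Submodule.exists_projection_of_disjoint {K V : Type*} [DivisionRing K]
    [AddCommGroup V] [Module K V] {p q : Submodule K V} (h : Disjoint p q) :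
    ∃ π : V →ₗ[K] V, (∀ x ∈ p, π x = x) ∧ ∀ x ∈ q, π x = 0 := by
  obtain ⟨r, hr⟩ := (p ⊔ q).exists_isCompl
  have hpqr : IsCompl p (q ⊔ r) := h.isCompl_sup_right_of_isCompl_sup_left hr
  exact ⟨p.projection _ hpqr, fun x hx => projection_apply_of_mem_left hpqr hx,
    fun x hx => projection_apply_of_mem_right hpqr (mem_sup_left hx)⟩

theorem iSupIndep.tendsto_zero_of_tendsto_sum {𝕜 V ι α : Type*} [NontriviallyNormedField 𝕜]
    [CompleteSpace 𝕜] [NormedAddCommGroup V] [NormedSpace 𝕜 V] [FiniteDimensional 𝕜 V]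
    {G : ι → Submodule 𝕜 V} (hG : iSupIndep G) {s : Finset ι} {f : ι → α → V}
    (hf : ∀ i ∈ s, ∀ a, f i a ∈ G i) {l : Filter α}
    (h : Tendsto (fun a => ∑ i ∈ s, f i a) l (𝓝 0)) {i : ι} (hi : i ∈ s) :
    Tendsto (f i) l (𝓝 0) := by
  obtain ⟨π, hπ_id, hπ_zero⟩ := Submodule.exists_projection_of_disjoint (hG i)
  have hπ_sum : ∀ a, π (∑ j ∈ s, f j a) = f i a := fun a => by
    rw [map_sum, Finset.sum_eq_single_of_mem i hi, hπ_id _ (hf i hi a)]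
    exact fun j hj hji => hπ_zero _ <| Submodule.mem_iSup_of_mem j <|
      Submodule.mem_iSup_of_mem hji (hf j hj a)
  simpa [Function.comp_def, hπ_sum] using (π.continuous_of_finiteDimensional.tendsto 0).comp h

theorem ContinuousLinearMap.exp_apply_of_apply_eq_smul {𝕂 E : Type*} [RCLike 𝕂]
    [NormedAddCommGroup E] [NormedSpace 𝕂 E] [CompleteSpace E] (A : E →L[𝕂] E) {ν : 𝕂} {u : E}
    (hu : A u = ν • u) : NormedSpace.exp A u = NormedSpace.exp ν • u := by
  have hpow : ∀ k : ℕ, (A ^ k) u = ν ^ k • u := fun k => by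
    induction k with
    | zero => simp
    | succ k ih => rw [pow_succ', mul_apply_eq_comp, ih, map_smul, hu, smul_smul, pow_succ]
  refine (((NormedSpace.exp_series_hasSum_exp' (𝕂 := 𝕂) A).mapL (apply 𝕂 E u))).unique ?_
  simpa [hpow, smul_smul] using (NormedSpace.exp_series_hasSum_exp' (𝕂 := 𝕂) ν).smul_const u

theorem ContinuousLinearMap.commute_pow_sub_smul_one_exp_smul {𝕂 E : Type*} [RCLike 𝕂]
    [NormedAddCommGroup E] [NormedSpace 𝕂 E] (A : E →L[𝕂] E) (ν t : 𝕂) (k : ℕ) :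
    Commute ((A - ν • 1) ^ k) (NormedSpace.exp (t • A)) :=
  (((Commute.refl A).sub_left ((Commute.one_left A).smul_left ν)).pow_left k).smul_right t
    |>.exp_right

theorem ContinuousLinearMap.iSupIndep_ker_pow_sub_smul_one {𝕂 E : Type*} [RCLike 𝕂]
    [NormedAddCommGroup E] [NormedSpace 𝕂 E] (A : E →L[𝕂] E) (k : ℕ) :
    iSupIndep fun μ : 𝕂 => LinearMap.ker (((A - μ • 1) ^ k : E →L[𝕂] E) : E →ₗ[𝕂] E) := by
  convert Module.End.independent_genEigenspace (A : E →ₗ[𝕂] E) k using 2 with μ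
  rw [Module.End.genEigenspace_nat]
  simp

theorem ContinuousLinearMap.eq_zero_of_tendsto_exp_smul_apply {E : Type*} [NormedAddCommGroup E]
    [NormedSpace ℂ E] [CompleteSpace E] (A : E →L[ℂ] E) {ρ : ℝ} {ν : ℂ} (hν : ν.re = ρ) {k : ℕ}
    {v : E} (hv : ((A - ν • 1) ^ k) v = 0)
    (h : Tendsto (fun t : ℝ => (Real.exp (-ρ * t) : ℂ) • NormedSpace.exp ((t : ℂ) • A) v)
      atTop (𝓝 0)) :
    v = 0 := by
  induction k generalizing v with
  | zero => simpa using hv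
  | succ k ih =>
    set u := ((A - ν • 1) ^ k) v
    have hu : A u = ν • u := by
      rwa [pow_succ', mul_apply_eq_comp, sub_apply, sub_eq_zero, smul_apply, one_apply_eq_self]
        at hv
    have hu_lim : Tendsto (fun t : ℝ => (Real.exp (-ρ * t) : ℂ) • NormedSpace.exp ((t : ℂ) • A) u)
        atTop (𝓝 0) := by
      have := (((A - ν • 1) ^ k).continuous.tendsto 0).comp h
      rw [map_zero] at this
      refine this.congr fun t => ?_
      rw [Function.comp_apply, map_smul, ← mul_apply_eq_comp,
        (A.commute_pow_sub_smul_one_exp_smul ν t k).eq, mul_apply_eq_comp]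
    have hu_norm : ∀ t : ℝ,
        ‖(Real.exp (-ρ * t) : ℂ) • NormedSpace.exp ((t : ℂ) • A) u‖ = ‖u‖ := fun t => by
      rw [exp_apply_of_apply_eq_smul _ (by rw [smul_apply, hu, smul_smul]), smul_smul,
        norm_smul, ← Complex.exp_eq_exp_ℂ, Complex.ofReal_exp, ← Complex.exp_add, Complex.norm_exp]
      simp [hν, mul_comm]
    have hu_zero : ‖u‖ = 0 := tendsto_nhds_unique
      (tendsto_const_nhds.congr fun t => (hu_norm t).symm)
      (tendsto_zero_iff_norm_tendsto_zero.mp hu_lim)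
    exact ih (norm_eq_zero.mp hu_zero) h

/-- Let `U` be a finite-dimensional complex normed space, `A ∈ End(U)`, `ρ ∈ ℝ`, and let `w`
belong to the sum of the generalized eigenspaces `ker (A − μ)^{dim U}` of `A` over the
eigenvalues `μ` of `A` with `Re μ = ρ`.  If `e^{−ρt} e^{tA} w → 0` as `t → +∞`, then `w = 0`. -/
theorem eq_zero_of_unitary_part_tendsto_zero
    (U : Type*) [NormedAddCommGroup U] [NormedSpace ℂ U] [FiniteDimensional ℂ U]
    (A : U →L[ℂ] U) (ρ : ℝ) (w : U)
    (hw : w ∈ ⨆ μ ∈ {μ : ℂ | μ ∈ spectrum ℂ A ∧ μ.re = ρ},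
      LinearMap.ker (((A - μ • (1 : U →L[ℂ] U)) ^ (Module.finrank ℂ U) : U →L[ℂ] U) : U →ₗ[ℂ] U))
    (hlim : Tendsto
      (fun t : ℝ => (Real.exp (-ρ * t) : ℂ) • (NormedSpace.exp ((t : ℂ) • A)) w)
      atTop (nhds 0)) :
    w = 0 := by
  rw [iSup_subtype'] at hw
  obtain ⟨c, hc, rfl⟩ := (Submodule.mem_iSup_iff_exists_finsupp _ w).mp hw
  replace hc : ∀ μ, ((A - (μ.1 : ℂ) • 1) ^ Module.finrank ℂ U) (c μ) = 0 := hc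
  refine Finset.sum_eq_zero fun μ hμ => A.eq_zero_of_tendsto_exp_smul_apply μ.2.2 (hc μ) ?_
  refine ((A.iSupIndep_ker_pow_sub_smul_one (Module.finrank ℂ U)).comp
    Subtype.val_injective).tendsto_zero_of_tendsto_sum
    (f := fun ν t => (Real.exp (-ρ * t) : ℂ) • NormedSpace.exp ((t : ℂ) • A) (c ν))
    (fun ν _ t => ?_) ?_ hμ
  · rw [Function.comp_apply, LinearMap.mem_ker, ContinuousLinearMap.coe_coe, map_smul,
      ← mul_apply_eq_comp, (A.commute_pow_sub_smul_one_exp_smul _ _ _).eq, mul_apply_eq_comp,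
      hc ν, map_zero, smul_zero]
  · simpa [Finsupp.sum, map_sum, Finset.smul_sum] using hlim
end

section
/- Let U be a finite-dimensional complex normed vector space, d ≥ 1, and Γ : ℝ^d → End(U) an ℝ-linear map whose values pairwise commute. Let λ : ℝ^d → ℂ be ℝ-linear and let E ∈ End(U) be an idempotent that commutes with Γ(X) for every X ∈ ℝ^d and such that E ∘ (Γ(X) − λ(X)·Id) is nilpotent for every X ∈ ℝ^d. Then there exists c ≥ 0 such that ‖e^{−λ(X)} E e^{Γ(X)}‖ ≤ c (1 + ‖X‖)^{dim U} for all X ∈ ℝ^d. -/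
/-!
Because `λ(X) • 1` is central, `e^{-λ(X)} E e^{Γ(X)} = E e^{Γ(X) - λ(X)}`, and since `E` is an
idempotent commuting with `Γ(X)` this is `E e^{N(X)}` with `N(X) = E (Γ(X) - λ(X))`. The map `N` is
linear and each `N(X)` is nilpotent, so `N(X) ^ dim U = 0` and the exponential series of `N(X)`
stops before degree `m = dim U`. Bounding `1/k!` by `choose m k` turns the finite sum into
`‖E‖ (1 + ‖N(X)‖)^m ≤ ‖E‖ (1 + ‖N‖)^m (1 + ‖X‖)^m`.
-/

open NormedSpace Finset Nat

theorem IsIdempotentElem.mul_pow_eq_mul_mul_pow {M : Type*} [Monoid M] {e b : M}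
    (he : IsIdempotentElem e) (h : Commute e b) (n : ℕ) : e * b ^ n = e * (e * b) ^ n := by
  cases n with
  | zero => simp
  | succ n => rw [h.mul_pow, he.pow_succ_eq, ← mul_assoc, he.eq]

theorem IsIdempotentElem.mul_exp_eq_mul_exp_mul {𝔸 : Type*} [NormedRing 𝔸] [NormedAlgebra ℚ 𝔸]
    [CompleteSpace 𝔸] {e b : 𝔸} (he : IsIdempotentElem e) (h : Commute e b) :
    e * exp b = e * exp (e * b) := by
  simp only [exp_eq_tsum_rat]
  rw [← (expSeries_summable' (𝕂 := ℚ) b).tsum_mul_left e,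
    ← (expSeries_summable' (𝕂 := ℚ) (e * b)).tsum_mul_left e]
  exact tsum_congr fun n => by rw [mul_smul_comm, mul_smul_comm, he.mul_pow_eq_mul_mul_pow h n]

theorem NormedSpace.exp_sub_smul_one {𝔸 : Type*} [NormedRing 𝔸] [NormedAlgebra ℂ 𝔸]
    [CompleteSpace 𝔸] (b : 𝔸) (z : ℂ) : exp (b - z • 1) = Complex.exp (-z) • exp b := by
  let +nondep : NormedAlgebra ℚ 𝔸 := .restrictScalars ℚ ℂ 𝔸
  have hcomm : Commute b ((-z) • 1) := (Commute.one_right b).smul_right _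
  rw [sub_eq_add_neg, ← neg_smul, exp_add_of_commute hcomm, ← Algebra.algebraMap_eq_smul_one,
    ← algebraMap_exp_comm, Algebra.algebraMap_eq_smul_one, mul_smul_comm, mul_one,
    Complex.exp_eq_exp_ℂ]

theorem IsNilpotent.pow_finrank_eq_zero {R M : Type*} [CommRing R] [IsDomain R] [AddCommGroup M]
    [Module R M] [Module.Finite R M] [Module.Free R M] {f : Module.End R M} (hf : IsNilpotent f) :
    f ^ Module.finrank R M = 0 := by
  simpa [hf.charpoly_eq_X_pow_finrank] using f.aeval_self_charpoly

theorem norm_mul_pow_le {α : Type*} [SeminormedRing α] (a b : α) (n : ℕ) :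
    ‖a * b ^ n‖ ≤ ‖a‖ * ‖b‖ ^ n := by
  induction n with
  | zero => simp
  | succ n ih =>
    calc ‖a * b ^ (n + 1)‖ = ‖a * b ^ n * b‖ := by rw [pow_succ, mul_assoc]
      _ ≤ ‖a * b ^ n‖ * ‖b‖ := norm_mul_le _ _
      _ ≤ ‖a‖ * ‖b‖ ^ (n + 1) := by
        rw [pow_succ, ← mul_assoc]; gcongr

namespace NormedSpace

theorem exp_eq_sum_range_of_pow_eq_zero {𝔸 : Type*} [Ring 𝔸] [Algebra ℚ 𝔸] [TopologicalSpace 𝔸]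
    [IsTopologicalRing 𝔸] {x : 𝔸} {m : ℕ} (hx : x ^ m = 0) :
    exp x = ∑ k ∈ range m, (k !⁻¹ : ℚ) • x ^ k := by
  rw [exp_eq_tsum_rat]
  refine tsum_eq_sum fun k hk => ?_
  rw [pow_eq_zero_of_le (not_lt.1 (mem_range.not.1 hk)) hx, smul_zero]

variable {𝔸 : Type*} [NormedRing 𝔸] [NormedAlgebra ℚ 𝔸]

theorem norm_mul_exp_le_of_pow_eq_zero (a : 𝔸) {x : 𝔸} {m : ℕ} (hx : x ^ m = 0) :
    ‖a * exp x‖ ≤ ‖a‖ * (1 + ‖x‖) ^ m := by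
  have hterm : ∀ k ∈ range m, ‖(k !⁻¹ : ℚ) • (a * x ^ k)‖ ≤ ‖a‖ * (‖x‖ ^ k * m.choose k) := by
    intro k hk
    have hfact : ‖(k !⁻¹ : ℚ)‖ ≤ 1 := by
      rw [norm_inv, ← Rat.norm_cast_real, Rat.cast_natCast, Real.norm_natCast]
      exact inv_le_one_of_one_le₀ (mod_cast k.factorial_pos)
    have hchoose : (1 : ℝ) ≤ m.choose k := mod_cast Nat.choose_pos (mem_range.1 hk).le
    calc ‖(k !⁻¹ : ℚ) • (a * x ^ k)‖ ≤ 1 * (‖a‖ * ‖x‖ ^ k) :=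
          (norm_smul_le _ _).trans (by gcongr; exact norm_mul_pow_le a x k)
      _ ≤ ‖a‖ * (‖x‖ ^ k * m.choose k) := by
          rw [one_mul]; gcongr; exact le_mul_of_one_le_right (by positivity) hchoose
  calc ‖a * exp x‖ = ‖∑ k ∈ range m, (k !⁻¹ : ℚ) • (a * x ^ k)‖ := by
        simp only [exp_eq_sum_range_of_pow_eq_zero hx, mul_sum, mul_smul_comm]
    _ ≤ ∑ k ∈ range m, ‖a‖ * (‖x‖ ^ k * m.choose k) := (norm_sum_le _ _).trans (sum_le_sum hterm)
    _ ≤ ∑ k ∈ range (m + 1), ‖a‖ * (‖x‖ ^ k * m.choose k) :=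
        sum_le_sum_of_subset_of_nonneg (range_subset_range.2 m.le_succ) fun _ _ _ => by positivity
    _ = ‖a‖ * (1 + ‖x‖) ^ m := by
        rw [← mul_sum, add_comm 1 ‖x‖, add_pow]
        simp only [one_pow, mul_one]

theorem exists_norm_mul_exp_le_of_pow_eq_zero {𝕜 V : Type*} [NontriviallyNormedField 𝕜]
    [CompleteSpace 𝕜] [NormedAddCommGroup V] [NormedSpace 𝕜 V] [FiniteDimensional 𝕜 V]
    [NormedSpace 𝕜 𝔸] (N : V →ₗ[𝕜] 𝔸) (a : 𝔸) {m : ℕ} (hN : ∀ X, N X ^ m = 0) :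
    ∃ c ≥ (0 : ℝ), ∀ X, ‖a * exp (N X)‖ ≤ c * (1 + ‖X‖) ^ m := by
  set C := ‖LinearMap.toContinuousLinearMap N‖
  refine ⟨‖a‖ * (1 + C) ^ m, by positivity, fun X => ?_⟩
  have hNX : ‖N X‖ ≤ C * ‖X‖ := (LinearMap.toContinuousLinearMap N).le_opNorm X
  calc ‖a * exp (N X)‖ ≤ ‖a‖ * (1 + ‖N X‖) ^ m := norm_mul_exp_le_of_pow_eq_zero a (hN X)
    _ ≤ ‖a‖ * ((1 + C) * (1 + ‖X‖)) ^ m := by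
        gcongr
        nlinarith [norm_nonneg X, norm_nonneg (LinearMap.toContinuousLinearMap N)]
    _ = ‖a‖ * (1 + C) ^ m * (1 + ‖X‖) ^ m := by rw [mul_pow, mul_assoc]

end NormedSpace

theorem truncated_exponential_polynomial_bound_general
    (U : Type*) [NormedAddCommGroup U] [NormedSpace ℂ U] [FiniteDimensional ℂ U]
    (d : ℕ)
    (Γ : EuclideanSpace ℝ (Fin d) →ₗ[ℝ] (U →L[ℂ] U))
    (lam : EuclideanSpace ℝ (Fin d) →ₗ[ℝ] ℂ)
    (E : U →L[ℂ] U) (hE : IsIdempotentElem E)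
    (hEcomm : ∀ X : EuclideanSpace ℝ (Fin d), Commute E (Γ X))
    (hnil : ∀ X : EuclideanSpace ℝ (Fin d),
      IsNilpotent (E * (Γ X - lam X • (1 : U →L[ℂ] U)))) :
    ∃ c ≥ (0 : ℝ), ∀ X : EuclideanSpace ℝ (Fin d),
      ‖Complex.exp (-(lam X)) • (E * NormedSpace.exp (Γ X))‖
        ≤ c * (1 + ‖X‖) ^ (Module.finrank ℂ U) := by
  let +nondep : NormedAlgebra ℚ (U →L[ℂ] U) := .restrictScalars ℚ ℂ _
  let N := LinearMap.mulLeft ℝ E ∘ₗ (Γ - lam.smulRight 1)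
  have hN_pow (X) : N X ^ Module.finrank ℂ U = 0 := by
    apply ContinuousLinearMap.coe_injective
    simpa [N] using ((hnil X).map ContinuousLinearMap.toLinearMapRingHom).pow_finrank_eq_zero
  obtain ⟨c, hc, hbound⟩ := exists_norm_mul_exp_le_of_pow_eq_zero N E hN_pow
  refine ⟨c, hc, fun X => ?_⟩
  have hE_sub : Commute E (Γ X - lam X • 1) :=
    (hEcomm X).sub_right ((Commute.one_right E).smul_right _)
  rw [← mul_smul_comm, ← exp_sub_smul_one, hE.mul_exp_eq_mul_exp_mul hE_sub]
  exact hbound X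

/-- Polynomial bound for truncated exponentials (cf. Lemma on `E_λ(X)`).
Let `Γ : ℝ^d → End(U)` be `ℝ`-linear with pairwise commuting values, `λ : ℝ^d → ℂ` be
`ℝ`-linear, and `E` an idempotent commuting with every `Γ(X)` such that
`E ∘ (Γ(X) − λ(X) Id)` is nilpotent for every `X`.  Then there is `c ≥ 0` with
`‖e^{−λ(X)} E e^{Γ(X)}‖ ≤ c (1 + ‖X‖)^{dim U}` for all `X ∈ ℝ^d`. -/
theorem truncated_exponential_polynomial_bound
    (U : Type*) [NormedAddCommGroup U] [NormedSpace ℂ U] [FiniteDimensional ℂ U]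
    (d : ℕ) (hd : 1 ≤ d)
    (Γ : EuclideanSpace ℝ (Fin d) →ₗ[ℝ] (U →L[ℂ] U))
    (hcomm : ∀ X Y : EuclideanSpace ℝ (Fin d), Commute (Γ X) (Γ Y))
    (lam : EuclideanSpace ℝ (Fin d) →ₗ[ℝ] ℂ)
    (E : U →L[ℂ] U) (hE : IsIdempotentElem E)
    (hEcomm : ∀ X : EuclideanSpace ℝ (Fin d), Commute E (Γ X))
    (hnil : ∀ X : EuclideanSpace ℝ (Fin d),
      IsNilpotent (E * (Γ X - lam X • (1 : U →L[ℂ] U)))) :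
    ∃ c ≥ (0 : ℝ), ∀ X : EuclideanSpace ℝ (Fin d),
      ‖Complex.exp (-(lam X)) • (E * NormedSpace.exp (Γ X))‖
        ≤ c * (1 + ‖X‖) ^ (Module.finrank ℂ U) :=
  truncated_exponential_polynomial_bound_general U d Γ lam E hE hEcomm hnil
end

section
/- Let U be a finite-dimensional complex normed vector space, A ∈ End(U), ρ ∈ ℝ, β < 0, N ∈ ℕ and C ≥ 0. Let E be the spectral projection of A associated to the set of eigenvalues μ of A with Re μ > ρ + β. Let Φ : [0,∞) → U be differentiable and ψ : [0,∞) → U continuous with Φ'(t) = A Φ(t) + ψ(t) and ‖ψ(t)‖ ≤ C (1+t)^N e^{(ρ+β)t} for all t ≥ 0. Then the integral ∫₀^∞ E e^{−sA} ψ(s) ds converges absolutely, the limit lim_{t→+∞} e^{−tA} E Φ(t) exists, and this limit equals E Φ(0) + ∫₀^∞ E e^{−sA} ψ(s) ds. -/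
/-!
On the generalized eigenspace of `μ`, `e^{-sA} = e^{-sμ} e^{-s(A - μ)}` and the second factor is a
polynomial in `s`. Since the spectrum is finite, there is `m > ρ + β` below the real parts of all
eigenvalues in the range of `E`, and `‖e^{-sA} E‖ = O(e^{-ms})` (in finite dimension, an operator
bound follows from bounds on a basis). Against `‖ψ(s)‖ ≤ C (1+s)^N e^{(ρ+β)s}` this makes
`E e^{-sA} ψ(s)` exponentially decaying, hence integrable. As `E` commutes with `A`, variation of
constants gives `d/dt (e^{-tA} E Φ(t)) = E e^{-tA} ψ(t)`, and the fundamental theorem of calculus on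
`[0, ∞)` yields the limit.
-/

open Filter MeasureTheory Asymptotics Topology

theorem isLittleO_one_add_pow_mul_exp (k : ℕ) {a b : ℝ} (hab : a < b) :
    (fun s : ℝ => (1 + s) ^ k * Real.exp (a * s)) =o[atTop] fun s => Real.exp (b * s) := by
  have hpow : (fun s : ℝ => (1 + s) ^ k) =o[atTop] fun s => Real.exp ((b - a) * (1 + s)) :=
    (isLittleO_pow_exp_pos_mul_atTop k (sub_pos.2 hab)).comp_tendsto
      (tendsto_atTop_add_const_left _ 1 tendsto_id)
  refine (hpow.mul_isBigO (isBigO_refl (fun s => Real.exp (a * s)) _)).trans_isBigO ?_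
  refine isBigO_of_le' (c := Real.exp (b - a)) _ fun s => ?_
  rw [← Real.exp_add, Real.norm_of_nonneg (Real.exp_pos _).le,
    Real.norm_of_nonneg (Real.exp_pos _).le, ← Real.exp_add]
  exact (congrArg Real.exp (by ring)).le

theorem isBigO_clm_apply_of_exp_decay {𝕜 U V : Type*} [NontriviallyNormedField 𝕜]
    [NormedAddCommGroup U] [NormedSpace 𝕜 U] [NormedAddCommGroup V] [NormedSpace 𝕜 V]
    {T : ℝ → U →L[𝕜] V} {ψ : ℝ → U} {m r C : ℝ} {N : ℕ}
    (hT : T =O[atTop] fun s => Real.exp (-m * s))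
    (hψ : ∀ s ≥ (0 : ℝ), ‖ψ s‖ ≤ C * (1 + s) ^ N * Real.exp (r * s)) (hrm : r < m) :
    (fun s => T s (ψ s)) =O[atTop] fun s => Real.exp (-((m - r) / 2) * s) := by
  have hψO : ψ =O[atTop] fun s => (1 + s) ^ N * Real.exp (r * s) := by
    refine IsBigO.of_bound C ?_
    filter_upwards [eventually_ge_atTop 0] with s hs
    rw [Real.norm_of_nonneg (by positivity), ← mul_assoc]
    exact hψ s hs
  have hnorms : (fun s => ‖T s‖ * ‖ψ s‖) =O[atTop]
      fun s => (1 + s) ^ N * Real.exp ((r - m) * s) := by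
    refine (hT.norm_left.mul hψO.norm_left).congr_right fun s => ?_
    rw [mul_left_comm, ← Real.exp_add]
    ring_nf
  refine IsBigO.trans ?_ (hnorms.trans (isLittleO_one_add_pow_mul_exp N (by linarith)).isBigO)
  refine isBigO_of_le _ fun s => ?_
  rw [Real.norm_of_nonneg (by positivity)]
  exact (T s).le_opNorm (ψ s)

theorem integrableOn_Ici_of_isBigO_exp_neg {F : Type*} [NormedAddCommGroup F] {f : ℝ → F}
    {a b : ℝ} (hb : 0 < b) (hf : ContinuousOn f (Set.Ici a))
    (ho : f =O[atTop] fun x => Real.exp (-b * x)) : IntegrableOn f (Set.Ici a) :=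
  (hf.locallyIntegrableOn measurableSet_Ici).integrableOn_of_isBigO_atTop ho
    ⟨Set.Ioi b, Ioi_mem_atTop b, exp_neg_integrableOn_Ioi b hb⟩

section Exponential

variable {U : Type*} [NormedAddCommGroup U] [NormedSpace ℂ U] [CompleteSpace U] (A : U →L[ℂ] U)

theorem exp_neg_smul_apply_eq_sum {μ : ℂ} {n : ℕ} {w : U} (hw : ((A - μ • 1) ^ n) w = 0) (s : ℂ) :
    NormedSpace.exp (-(s • A)) w = ∑ k ∈ Finset.range n,
      (Complex.exp (-(s * μ)) * (-s) ^ k / k.factorial) • ((A - μ • 1) ^ k) w := by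
  set B := A - μ • (1 : U →L[ℂ] U)
  have hsplit : -(s • A) = (-(s * μ)) • (1 : U →L[ℂ] U) + (-s) • B := by
    simp only [B]; module
  have hcomm : Commute ((-(s * μ)) • (1 : U →L[ℂ] U)) ((-s) • B) :=
    ((Commute.one_left B).smul_left _).smul_right _
  have hscalar : NormedSpace.exp ((-(s * μ)) • (1 : U →L[ℂ] U)) = Complex.exp (-(s * μ)) • 1 := by
    rw [← Algebra.algebraMap_eq_smul_one, ← NormedSpace.algebraMap_exp_comm,
      Algebra.algebraMap_eq_smul_one, Complex.exp_eq_exp_ℂ]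
  have hvanish : ∀ k ∉ Finset.range n, ((k.factorial : ℂ)⁻¹ • ((-s) • B) ^ k) w = 0 := by
    intro k hk
    rw [← Nat.sub_add_cancel (not_lt.1 (Finset.mem_range.not.1 hk))]
    simp only [smul_pow, pow_add, smul_apply, mul_apply_eq_comp, hw,
      map_zero, smul_zero]
  have hnil : NormedSpace.exp ((-s) • B) w
      = ∑ k ∈ Finset.range n, ((k.factorial : ℂ)⁻¹ • ((-s) • B) ^ k) w :=
    (((NormedSpace.exp_series_hasSum_exp' (𝕂 := ℂ) ((-s) • B)).mapL
      (ContinuousLinearMap.apply ℂ U w)).unique (hasSum_sum_of_ne_finset_zero hvanish))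
  have hball : ∀ x : U →L[ℂ] U, x ∈ Metric.eball 0 (NormedSpace.expSeries ℂ (U →L[ℂ] U)).radius :=
    fun x => (NormedSpace.expSeries_radius_eq_top ℂ (U →L[ℂ] U)).symm ▸ edist_lt_top _ _
  rw [hsplit, NormedSpace.exp_add_of_commute_of_mem_ball hcomm (hball _) (hball _), hscalar,
    mul_apply_eq_comp, smul_apply, one_apply_eq_self, hnil, Finset.smul_sum]
  refine Finset.sum_congr rfl fun k _ => ?_
  rw [smul_pow, smul_smul]
  simp only [smul_apply, smul_smul]
  ring_nf

theorem isBigO_exp_neg_smul_apply {μ : ℂ} {n : ℕ} {w : U} (hw : ((A - μ • 1) ^ n) w = 0)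
    {m : ℝ} (hm : m < μ.re) :
    (fun s : ℝ => NormedSpace.exp (-((s : ℂ) • A)) w) =O[atTop] fun s => Real.exp (-m * s) := by
  simp_rw [exp_neg_smul_apply_eq_sum A hw]
  refine IsBigO.fun_sum fun k _ => ?_
  have hbound : ∀ᶠ s : ℝ in atTop,
      ‖(Complex.exp (-((s : ℂ) * μ)) * (-(s : ℂ)) ^ k / k.factorial) • ((A - μ • 1) ^ k) w‖
        ≤ ‖((A - μ • 1) ^ k) w‖ * ‖(1 + s) ^ k * Real.exp (-μ.re * s)‖ := by
    filter_upwards [eventually_ge_atTop 0] with s hs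
    have hcoeff : ‖Complex.exp (-((s : ℂ) * μ)) * (-(s : ℂ)) ^ k / k.factorial‖
        ≤ (1 + s) ^ k * Real.exp (-μ.re * s) := by
      rw [norm_div, norm_mul, Complex.norm_exp, norm_pow, norm_neg, Complex.norm_real,
        Real.norm_of_nonneg hs, Complex.norm_natCast, Complex.neg_re, Complex.re_ofReal_mul]
      have hpow : s ^ k / k.factorial ≤ (1 + s) ^ k :=
        (div_le_self (by positivity) (by exact_mod_cast k.factorial_pos)).trans
          (pow_le_pow_left₀ hs (by linarith) k)
      calc Real.exp (-(s * μ.re)) * s ^ k / k.factorial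
          = s ^ k / k.factorial * Real.exp (-μ.re * s) := by ring_nf
        _ ≤ (1 + s) ^ k * Real.exp (-μ.re * s) := by gcongr
    rw [norm_smul, mul_comm, Real.norm_of_nonneg (by positivity)]
    gcongr
  exact (IsBigO.of_bound _ hbound).trans
    (isLittleO_one_add_pow_mul_exp k (neg_lt_neg hm)).isBigO

theorem hasDerivAt_exp_neg_smul (t : ℝ) :
    HasDerivAt (fun τ : ℝ => NormedSpace.exp (-((τ : ℂ) • A)))
      (NormedSpace.exp (-((t : ℂ) • A)) * (-A)) t := by
  simpa [Function.comp_def] using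
    (hasDerivAt_exp_smul_const (-A) (t : ℂ)).scomp t (hasDerivAt_id t).ofReal_comp

theorem continuous_exp_neg_smul : Continuous fun s : ℝ => NormedSpace.exp (-((s : ℂ) • A)) :=
  continuous_iff_continuousAt.2 fun t => (hasDerivAt_exp_neg_smul A t).continuousAt

theorem hasDerivAt_exp_neg_smul_apply {f : ℝ → U} {f' : U} {t : ℝ} (hf : HasDerivAt f f' t) :
    HasDerivAt (fun τ : ℝ => NormedSpace.exp (-((τ : ℂ) • A)) (f τ))
      (NormedSpace.exp (-((t : ℂ) • A)) (f' - A (f t))) t := by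
  have hexp := (ContinuousLinearMap.restrictScalarsL ℂ U U ℝ ℝ).hasFDerivAt.comp_hasDerivAt t
    (hasDerivAt_exp_neg_smul A t)
  refine (hexp.clm_apply hf).congr_deriv ?_
  simp [sub_eq_neg_add]

theorem hasDerivAt_exp_neg_smul_apply_of_commute {E : U →L[ℂ] U} (hEA : Commute E A)
    {Φ : ℝ → U} {ψ : U} {t : ℝ} (hΦ : HasDerivAt Φ (A (Φ t) + ψ) t) :
    HasDerivAt (fun τ : ℝ => NormedSpace.exp (-((τ : ℂ) • A)) (E (Φ τ)))
      (NormedSpace.exp (-((t : ℂ) • A)) (E ψ)) t := by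
  have hEΦ : HasDerivAt (fun τ => E (Φ τ)) (E (A (Φ t) + ψ)) t :=
    (E.restrictScalars ℝ).hasFDerivAt.comp_hasDerivAt t hΦ
  refine (hasDerivAt_exp_neg_smul_apply A hEΦ).congr_deriv ?_
  rw [map_add, show E (A (Φ t)) = A (E (Φ t)) from congr($(hEA.eq) (Φ t)), add_sub_cancel_left]

def expDecaySubmodule (m : ℝ) : Submodule ℂ U where
  carrier := {v | (fun s : ℝ => NormedSpace.exp (-((s : ℂ) • A)) v) =O[atTop]
    fun s => Real.exp (-m * s)}
  add_mem' hv hw := by simpa only [Set.mem_ofPred_eq, map_add] using hv.add hw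
  zero_mem' := by simpa only [Set.mem_ofPred_eq, map_zero] using isBigO_zero _ _
  smul_mem' c v hv := by
    simp only [Set.mem_ofPred_eq, map_smul]
    exact hv.const_smul_left c

theorem ker_pow_le_expDecaySubmodule {μ : ℂ} {m : ℝ} (hm : m < μ.re) (n : ℕ) :
    LinearMap.ker ((((A - μ • (1 : U →L[ℂ] U)) ^ n : U →L[ℂ] U) : U →ₗ[ℂ] U))
      ≤ expDecaySubmodule A m :=
  fun _ hw => isBigO_exp_neg_smul_apply A hw hm

end Exponential

theorem ContinuousLinearMap.isBigO_of_forall_isBigO_apply {α 𝕜 E F G : Type*}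
    [NontriviallyNormedField 𝕜] [CompleteSpace 𝕜] [NormedAddCommGroup E] [NormedSpace 𝕜 E]
    [FiniteDimensional 𝕜 E] [NormedAddCommGroup F] [NormedSpace 𝕜 F] [Norm G] {l : Filter α}
    {T : α → E →L[𝕜] F} {g : α → G} (h : ∀ v, (fun a => T a v) =O[l] g) : T =O[l] g := by
  let b := Module.finBasis 𝕜 E
  obtain ⟨C, -, hC⟩ := b.exists_opNorm_le (F := F)
  have hsum : (fun a => ∑ i, ‖T a (b i)‖) =O[l] g :=
    IsBigO.fun_sum fun i _ => (h (b i)).norm_left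
  refine IsBigO.trans (isBigO_of_le' (c := C) _ fun a => ?_) hsum
  rw [Real.norm_of_nonneg (by positivity)]
  exact hC (by positivity) fun i => Finset.single_le_sum (f := fun i => ‖T a (b i)‖)
    (fun i _ => norm_nonneg _) (Finset.mem_univ i)

section SpectralSubspace

variable {U : Type*} [NormedAddCommGroup U] [NormedSpace ℂ U] (A : U →L[ℂ] U)

noncomputable def spectralSubspace (P : ℂ → Prop) : Submodule ℂ U :=
  ⨆ μ ∈ {μ : ℂ | μ ∈ spectrum ℂ A ∧ P μ},
    LinearMap.ker ((((A - μ • (1 : U →L[ℂ] U)) ^ (Module.finrank ℂ U) : U →L[ℂ] U) : U →ₗ[ℂ] U))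

theorem ker_pow_sub_smul_eq_bot {μ : ℂ} (hμ : μ ∉ spectrum ℂ A) (n : ℕ) :
    LinearMap.ker ((((A - μ • (1 : U →L[ℂ] U)) ^ n : U →L[ℂ] U) : U →ₗ[ℂ] U)) = ⊥ := by
  have hunit : IsUnit ((A - μ • (1 : U →L[ℂ] U)) ^ n) := by
    refine IsUnit.pow n ?_
    simpa [Algebra.algebraMap_eq_smul_one] using (spectrum.notMem_iff.mp hμ).neg
  exact LinearMap.ker_eq_bot.mpr
    ((Module.End.isUnit_iff _).mp (hunit.map ContinuousLinearMap.toLinearMapRingHom)).1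

theorem ker_pow_finrank_le_spectralSubspace {P : ℂ → Prop} {μ : ℂ} (hμ : μ ∈ spectrum ℂ A)
    (hP : P μ) :
    LinearMap.ker ((((A - μ • (1 : U →L[ℂ] U)) ^ (Module.finrank ℂ U) : U →L[ℂ] U) : U →ₗ[ℂ] U))
      ≤ spectralSubspace A P :=
  le_biSup (fun μ => LinearMap.ker ((((A - μ • (1 : U →L[ℂ] U)) ^ (Module.finrank ℂ U) :
    U →L[ℂ] U) : U →ₗ[ℂ] U))) (show μ ∈ {μ | μ ∈ spectrum ℂ A ∧ P μ} from ⟨hμ, hP⟩)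

theorem spectralSubspace_le_comap (P : ℂ → Prop) :
    spectralSubspace A P ≤ (spectralSubspace A P).comap (A : U →ₗ[ℂ] U) := by
  refine iSup₂_le fun μ hμ v hv => ?_
  have hcomm : Commute ((A - μ • (1 : U →L[ℂ] U)) ^ Module.finrank ℂ U) A :=
    ((Commute.refl A).sub_left ((Commute.one_left A).smul_left μ)).pow_left _
  have hv' : ((A - μ • (1 : U →L[ℂ] U)) ^ Module.finrank ℂ U) v = 0 := hv
  refine ker_pow_finrank_le_spectralSubspace A hμ.1 hμ.2 ?_
  change ((A - μ • (1 : U →L[ℂ] U)) ^ Module.finrank ℂ U) (A v) = 0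
  rw [← mul_apply_eq_comp, hcomm.eq, mul_apply_eq_comp, hv', map_zero]

variable [FiniteDimensional ℂ U]

theorem ker_pow_finrank_eq_maxGenEigenspace (μ : ℂ) :
    LinearMap.ker ((((A - μ • (1 : U →L[ℂ] U)) ^ (Module.finrank ℂ U) : U →L[ℂ] U) : U →ₗ[ℂ] U))
      = Module.End.maxGenEigenspace (A : Module.End ℂ U) μ := by
  rw [Module.End.maxGenEigenspace_eq_genEigenspace_finrank, Module.End.genEigenspace_nat]
  simp [ContinuousLinearMap.toLinearMap_pow]

theorem spectralSubspace_sup_spectralSubspace_not (P : ℂ → Prop) :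
    spectralSubspace A P ⊔ spectralSubspace A (fun μ => ¬ P μ) = ⊤ := by
  refine top_unique ?_
  rw [← Module.End.iSup_maxGenEigenspace_eq_top (A : Module.End ℂ U)]
  refine iSup_le fun μ => ?_
  rw [← ker_pow_finrank_eq_maxGenEigenspace]
  by_cases hμ : μ ∈ spectrum ℂ A
  · by_cases hP : P μ
    · exact le_sup_of_le_left (ker_pow_finrank_le_spectralSubspace A hμ hP)
    · exact le_sup_of_le_right (ker_pow_finrank_le_spectralSubspace A (P := fun μ => ¬ P μ) hμ hP)
  · rw [ker_pow_sub_smul_eq_bot A hμ]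
    exact bot_le

section Projection

variable {A} {P : ℂ → Prop} {E : U →L[ℂ] U}

theorem apply_mem_spectralSubspace (hE1 : ∀ v ∈ spectralSubspace A P, E v = v)
    (hE0 : ∀ v ∈ spectralSubspace A (fun μ => ¬ P μ), E v = 0) (w : U) :
    E w ∈ spectralSubspace A P := by
  obtain ⟨a, ha, b, hb, rfl⟩ := Submodule.mem_sup.mp <|
    Submodule.eq_top_iff'.mp (spectralSubspace_sup_spectralSubspace_not A P) w
  rwa [map_add, hE1 a ha, hE0 b hb, add_zero]

theorem commute_of_spectralProjection (hE1 : ∀ v ∈ spectralSubspace A P, E v = v)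
    (hE0 : ∀ v ∈ spectralSubspace A (fun μ => ¬ P μ), E v = 0) : Commute E A := by
  ext w
  obtain ⟨a, ha, b, hb, rfl⟩ := Submodule.mem_sup.mp <|
    Submodule.eq_top_iff'.mp (spectralSubspace_sup_spectralSubspace_not A P) w
  have hAa : A a ∈ spectralSubspace A P := spectralSubspace_le_comap A P ha
  have hAb : A b ∈ spectralSubspace A (fun μ => ¬ P μ) := spectralSubspace_le_comap A _ hb
  simp only [mul_apply_eq_comp, map_add, hE1 a ha, hE0 b hb, hE1 _ hAa, hE0 _ hAb, map_zero]

end Projection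

end SpectralSubspace

section Decay

variable {U : Type*} [NormedAddCommGroup U] [NormedSpace ℂ U] [FiniteDimensional ℂ U]
  (A : U →L[ℂ] U)

theorem exists_lt_forall_lt_re_of_mem_spectrum (r : ℝ) :
    ∃ m, r < m ∧ ∀ μ ∈ spectrum ℂ A, r < μ.re → m < μ.re := by
  have hfin : (spectrum ℂ A).Finite := by
    rw [ContinuousLinearMap.spectrum_eq]
    exact Module.End.finite_spectrum _
  have hev : ∀ᶠ m in 𝓝[>] r, ∀ μ ∈ spectrum ℂ A, r < μ.re → m < μ.re :=
    (eventually_all_finite hfin).2 fun μ _ => (em (r < μ.re)).elim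
      (fun h => (eventually_nhdsWithin_of_eventually_nhds (eventually_lt_nhds h)).mono
        fun _ hm _ => hm)
      (fun h => .of_forall fun _ h' => absurd h' h)
  exact (hev.and self_mem_nhdsWithin).exists.imp fun _ h => ⟨h.2, h.1⟩

theorem spectralSubspace_le_expDecaySubmodule {r m : ℝ}
    (hm : ∀ μ ∈ spectrum ℂ A, r < μ.re → m < μ.re) :
    spectralSubspace A (fun μ => r < μ.re) ≤ expDecaySubmodule A m :=
  iSup₂_le fun μ hμ => ker_pow_le_expDecaySubmodule A (hm μ hμ.1 hμ.2) _

theorem exists_isBigO_exp_neg_smul_comp_spectralProjection {r : ℝ} {E : U →L[ℂ] U}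
    (hE1 : ∀ v ∈ spectralSubspace A (fun μ => r < μ.re), E v = v)
    (hE0 : ∀ v ∈ spectralSubspace A (fun μ => ¬ r < μ.re), E v = 0) :
    ∃ m, r < m ∧ (fun s : ℝ => NormedSpace.exp (-((s : ℂ) • A)) ∘L E) =O[atTop]
      fun s => Real.exp (-m * s) := by
  obtain ⟨m, hrm, hm⟩ := exists_lt_forall_lt_re_of_mem_spectrum A r
  refine ⟨m, hrm, ContinuousLinearMap.isBigO_of_forall_isBigO_apply fun w => ?_⟩
  exact spectralSubspace_le_expDecaySubmodule A hm (apply_mem_spectralSubspace hE1 hE0 w)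

end Decay

theorem tendsto_add_integral_Ioi_of_hasDerivAt {F : Type*} [NormedAddCommGroup F]
    [NormedSpace ℝ F] [CompleteSpace F] {f f' : ℝ → F} {a : ℝ}
    (hcont : ContinuousWithinAt f (Set.Ici a) a) (hderiv : ∀ x ∈ Set.Ioi a, HasDerivAt f (f' x) x)
    (hint : IntegrableOn f' (Set.Ioi a)) :
    Tendsto f atTop (𝓝 (f a + ∫ x in Set.Ioi a, f' x)) := by
  have hlim := tendsto_limUnder_of_hasDerivAt_of_integrableOn_Ioi hderiv hint
  rwa [integral_Ioi_of_hasDerivAt_of_tendsto hcont hderiv hint hlim, add_sub_cancel]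

theorem limit_of_projected_solution_exists_general
    (U : Type*) [NormedAddCommGroup U] [NormedSpace ℂ U] [FiniteDimensional ℂ U]
    (A : U →L[ℂ] U) (ρ β : ℝ) (N : ℕ) (C : ℝ)
    (E : U →L[ℂ] U)
    (hE1 : ∀ v ∈ ⨆ μ ∈ {μ : ℂ | μ ∈ spectrum ℂ A ∧ ρ + β < μ.re},
        LinearMap.ker ((((A - μ • (1 : U →L[ℂ] U)) ^ (Module.finrank ℂ U) : U →L[ℂ] U) : U →ₗ[ℂ] U)), E v = v)
    (hE0 : ∀ v ∈ ⨆ μ ∈ {μ : ℂ | μ ∈ spectrum ℂ A ∧ ¬ ρ + β < μ.re},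
        LinearMap.ker ((((A - μ • (1 : U →L[ℂ] U)) ^ (Module.finrank ℂ U) : U →L[ℂ] U) : U →ₗ[ℂ] U)), E v = 0)
    (Φ ψ : ℝ → U)
    (hΦ : ∀ t ≥ (0:ℝ), HasDerivAt Φ (A (Φ t) + ψ t) t)
    (hψc : ContinuousOn ψ (Set.Ici 0))
    (hψ : ∀ t ≥ (0:ℝ), ‖ψ t‖ ≤ C * (1 + t) ^ N * Real.exp ((ρ + β) * t)) :
    IntegrableOn (fun s : ℝ => E ((NormedSpace.exp (-((s : ℂ) • A))) (ψ s))) (Set.Ici 0) ∧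
    Tendsto (fun t : ℝ => (NormedSpace.exp (-((t : ℂ) • A))) (E (Φ t))) atTop
      (nhds (E (Φ 0) + ∫ s in Set.Ici (0:ℝ),
        E ((NormedSpace.exp (-((s : ℂ) • A))) (ψ s)))) := by
  obtain ⟨m, hm, hdecay⟩ := exists_isBigO_exp_neg_smul_comp_spectralProjection A hE1 hE0
  have hcomm : Commute E A := commute_of_spectralProjection hE1 hE0
  have hh : ∀ s : ℝ, E (NormedSpace.exp (-((s : ℂ) • A)) (ψ s))
      = (NormedSpace.exp (-((s : ℂ) • A)) ∘L E) (ψ s) := fun s =>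
    congr($(((hcomm.smul_right (s : ℂ)).neg_right.exp_right).eq) (ψ s))
  have hint : IntegrableOn (fun s : ℝ => E (NormedSpace.exp (-((s : ℂ) • A)) (ψ s)))
      (Set.Ici 0) := by
    refine integrableOn_Ici_of_isBigO_exp_neg (b := (m - (ρ + β)) / 2) (by linarith)
      (E.continuous.comp_continuousOn ((continuous_exp_neg_smul A).continuousOn.clm_apply hψc)) ?_
    simp_rw [hh]
    exact isBigO_clm_apply_of_exp_decay hdecay hψ hm
  have hderiv : ∀ t ≥ (0 : ℝ), HasDerivAt (fun τ : ℝ => NormedSpace.exp (-((τ : ℂ) • A)) (E (Φ τ)))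
      (E (NormedSpace.exp (-((t : ℂ) • A)) (ψ t))) t := fun t ht => by
    rw [hh]
    exact hasDerivAt_exp_neg_smul_apply_of_commute A hcomm (hΦ t ht)
  refine ⟨hint, ?_⟩
  rw [integral_Ici_eq_integral_Ioi]
  simpa only [Complex.ofReal_zero, zero_smul, neg_zero, NormedSpace.exp_zero, one_apply_eq_self]
    using tendsto_add_integral_Ioi_of_hasDerivAt (hderiv 0 le_rfl).continuousAt.continuousWithinAt
      (fun t ht => hderiv t ht.le) (hint.mono_set Set.Ioi_subset_Ici_self)

/-- Let `A ∈ End(U)`, `ρ ∈ ℝ`, `β < 0`, and let `E` be the spectral projection of `A`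
associated to the eigenvalues `μ` with `Re μ > ρ + β`.  If `Φ' = AΦ + ψ` on `[0,∞)` with
`‖ψ(t)‖ ≤ C (1+t)^N e^{(ρ+β)t}`, then `∫₀^∞ E e^{−sA} ψ(s) ds` converges absolutely and
`lim_{t→∞} e^{−tA} E Φ(t)` exists and equals `E Φ(0) + ∫₀^∞ E e^{−sA} ψ(s) ds`. -/
theorem limit_of_projected_solution_exists
    (U : Type*) [NormedAddCommGroup U] [NormedSpace ℂ U] [FiniteDimensional ℂ U]
    (A : U →L[ℂ] U) (ρ β : ℝ) (hβ : β < 0) (N : ℕ) (C : ℝ) (hC : 0 ≤ C)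
    (E : U →L[ℂ] U)
    (hE1 : ∀ v ∈ ⨆ μ ∈ {μ : ℂ | μ ∈ spectrum ℂ A ∧ ρ + β < μ.re},
        LinearMap.ker ((((A - μ • (1 : U →L[ℂ] U)) ^ (Module.finrank ℂ U) : U →L[ℂ] U) : U →ₗ[ℂ] U)), E v = v)
    (hE0 : ∀ v ∈ ⨆ μ ∈ {μ : ℂ | μ ∈ spectrum ℂ A ∧ ¬ ρ + β < μ.re},
        LinearMap.ker ((((A - μ • (1 : U →L[ℂ] U)) ^ (Module.finrank ℂ U) : U →L[ℂ] U) : U →ₗ[ℂ] U)), E v = 0)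
    (Φ ψ : ℝ → U)
    (hΦ : ∀ t ≥ (0:ℝ), HasDerivAt Φ (A (Φ t) + ψ t) t)
    (hψc : ContinuousOn ψ (Set.Ici 0))
    (hψ : ∀ t ≥ (0:ℝ), ‖ψ t‖ ≤ C * (1 + t) ^ N * Real.exp ((ρ + β) * t)) :
    IntegrableOn (fun s : ℝ => E ((NormedSpace.exp (-((s : ℂ) • A))) (ψ s))) (Set.Ici 0) ∧
    Tendsto (fun t : ℝ => (NormedSpace.exp (-((t : ℂ) • A))) (E (Φ t))) atTop
      (nhds (E (Φ 0) + ∫ s in Set.Ici (0:ℝ),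
        E ((NormedSpace.exp (-((s : ℂ) • A))) (ψ s)))) :=
  limit_of_projected_solution_exists_general U A ρ β N C E hE1 hE0 Φ ψ hΦ hψc hψ
end

section
/- Let U be a finite-dimensional complex normed vector space, d ≥ 1, and Γ : ℝ^d → End(U) an ℝ-linear map whose values pairwise commute. Let λ : ℝ^d → ℂ be ℝ-linear and let E ∈ End(U) be an idempotent commuting with Γ(X) for all X ∈ ℝ^d and such that E ∘ (Γ(X) − λ(X)·Id) is nilpotent for all X ∈ ℝ^d. Let X₁, X₂, a ∈ ℝ^d, let Φ : ℝ^d → U be differentiable, and for i = 1, 2 let Ψ_i : ℝ^d → U be continuous with D_{X_i}Φ(b) = Γ(X_i) Φ(b) + Ψ_i(b) for all b ∈ ℝ^d. Assume there exist C, ε > 0 and N ∈ ℕ such that ‖Ψ_i(a + t₁X₁ + t₂X₂)‖ ≤ C (1 + t₁ + t₂)^N e^{Re λ(t₁X₁ + t₂X₂)} e^{−ε(t₁+t₂)} for i = 1, 2 and all t₁, t₂ ≥ 0. Then the limits L_i = lim_{t→+∞} e^{−tΓ(X_i)} E Φ(a + tX_i) exist for i = 1, 2, and L₁ = L₂. 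-/
/-!
Put `F(t₁, t₂) = e^{-t₁Γ(X₁)} e^{-t₂Γ(X₂)} E Φ(a + t₁X₁ + t₂X₂)`. By variation of constants its
partial derivatives are the same expression with `Φ` replaced by `Ψ₁`, `Ψ₂`. On the range of `E`
the operator `Γ(Y)` is `λ(Y)` plus a nilpotent, so `‖e^{Γ(Y)} E‖` is at most a polynomial in `‖Y‖`
times `e^{Re λ(Y)}`; this cancels the factor `e^{Re λ}` in the bound on `Ψᵢ`, and both partial
derivatives decay like `e^{-ε(t₁+t₂)/2}`. Hence `F` has limits along both axes, and going around
the square `[0, T]²` shows that they differ by `O(T e^{-εT/2})`, i.e. they agree.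
-/

open Filter Topology NormedSpace Set MeasureTheory
open scoped Nat

section ExpIdempotent
variable {𝔸 : Type*} [NormedRing 𝔸]

theorem Commute.pow_mul_of_isIdempotentElem {M : Type*} [Monoid M] {b e : M} (h : Commute b e)
    (he : IsIdempotentElem e) (k : ℕ) : b ^ k * e = (b * e) ^ k * e := by
  rw [h.mul_pow, mul_assoc, ← pow_succ, he.pow_succ_eq]

theorem norm_pow_mul_le (D M : 𝔸) (k : ℕ) : ‖D ^ k * M‖ ≤ ‖D‖ ^ k * ‖M‖ := by
  induction k with
  | zero => simp
  | succ k ih =>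
    calc ‖D ^ (k + 1) * M‖ = ‖D * (D ^ k * M)‖ := by rw [pow_succ', mul_assoc]
      _ ≤ ‖D‖ * (‖D‖ ^ k * ‖M‖) := (norm_mul_le _ _).trans (by gcongr)
      _ = ‖D‖ ^ (k + 1) * ‖M‖ := by ring

namespace NormedSpace

variable [NormedAlgebra ℂ 𝔸] [CompleteSpace 𝔸]

theorem exp_mul_of_isIdempotentElem {B M : 𝔸} (h : Commute B M) (hM : IsIdempotentElem M) :
    exp B * M = exp (B * M) * M := by
  refine ((exp_series_hasSum_exp' (𝕂 := ℂ) B).mul_right M).unique ?_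
  simpa only [smul_mul_assoc, ← h.pow_mul_of_isIdempotentElem hM] using
    (exp_series_hasSum_exp' (𝕂 := ℂ) (B * M)).mul_right M

theorem exp_eq_sum_of_pow_eq_zero {D : 𝔸} {n : ℕ} (hD : D ^ n = 0) :
    exp D = ∑ k ∈ Finset.range n, (k !⁻¹ : ℂ) • D ^ k := by
  refine (exp_series_hasSum_exp' (𝕂 := ℂ) D).unique (hasSum_sum_of_ne_finset_zero fun k hk => ?_)
  rw [pow_eq_zero_of_le (by simpa using hk) hD, smul_zero]

theorem norm_exp_mul_le_of_pow_eq_zero {D : 𝔸} (M : 𝔸) {n : ℕ} (hD : D ^ n = 0) :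
    ‖exp D * M‖ ≤ n * (1 + ‖D‖) ^ n * ‖M‖ := by
  rw [exp_eq_sum_of_pow_eq_zero hD, Finset.sum_mul]
  refine (norm_sum_le _ _).trans ?_
  calc ∑ k ∈ Finset.range n, ‖(k !⁻¹ : ℂ) • D ^ k * M‖
      ≤ ∑ _k ∈ Finset.range n, (1 + ‖D‖) ^ n * ‖M‖ := by
        refine Finset.sum_le_sum fun k hk => ?_
        rw [smul_mul_assoc, norm_smul, norm_inv, Complex.norm_natCast]
        calc (k ! : ℝ)⁻¹ * ‖D ^ k * M‖ ≤ 1 * (‖D‖ ^ k * ‖M‖) := by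
              gcongr
              · exact inv_le_one_of_one_le₀ (by exact_mod_cast k.factorial_pos)
              · exact norm_pow_mul_le D M k
          _ ≤ (1 + ‖D‖) ^ n * ‖M‖ := by
              rw [one_mul]
              gcongr
              calc ‖D‖ ^ k ≤ (1 + ‖D‖) ^ k := by gcongr; linarith
                _ ≤ (1 + ‖D‖) ^ n :=
                  pow_le_pow_right₀ (by linarith [norm_nonneg D]) (Finset.mem_range.mp hk).le
    _ = n * (1 + ‖D‖) ^ n * ‖M‖ := by simp [mul_assoc]

theorem norm_exp_mul_le_of_isIdempotentElem {B M : 𝔸} {μ : ℂ} {n : ℕ} (h : Commute B M)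
    (hM : IsIdempotentElem M) (hn : (M * (B - μ • 1)) ^ n = 0) :
    ‖exp B * M‖ ≤ n * (1 + ‖M * (B - μ • 1)‖) ^ n * ‖M‖ * Real.exp μ.re := by
  -- `exp_add_of_commute` is stated for `ℚ`-algebras.
  let _ : NormedAlgebra ℚ 𝔸 := .restrictScalars ℚ ℂ 𝔸
  have hsplit : exp B = Complex.exp μ • exp (B - μ • 1) :=
    calc exp B = exp (algebraMap ℂ 𝔸 μ + (B - μ • 1)) := by
          rw [Algebra.algebraMap_eq_smul_one, add_sub_cancel]
      _ = exp (algebraMap ℂ 𝔸 μ) * exp (B - μ • 1) := exp_add_of_commute (Algebra.commutes _ _)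
      _ = Complex.exp μ • exp (B - μ • 1) := by
          rw [← algebraMap_exp_comm, ← Complex.exp_eq_exp_ℂ, ← Algebra.smul_def]
  have hcomm : Commute (B - μ • 1) M := h.sub_left ((Commute.one_left M).smul_left μ)
  rw [hsplit, smul_mul_assoc, exp_mul_of_isIdempotentElem hcomm hM, hcomm.eq, norm_smul,
    Complex.norm_exp, mul_comm]
  gcongr
  exact norm_exp_mul_le_of_pow_eq_zero M hn

end NormedSpace

end ExpIdempotent

theorem ContinuousLinearMap.pow_finrank_eq_zero_of_isNilpotent {𝕜 U : Type*} [Field 𝕜]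
    [AddCommGroup U] [Module 𝕜 U] [TopologicalSpace U] [IsTopologicalAddGroup U]
    [FiniteDimensional 𝕜 U] {T : U →L[𝕜] U}
    (hT : IsNilpotent T) : T ^ Module.finrank 𝕜 U = 0 := by
  have hT' : IsNilpotent (T : U →ₗ[𝕜] U) := hT.map ContinuousLinearMap.toLinearMapRingHom
  have h : (T : U →ₗ[𝕜] U) ^ Module.finrank 𝕜 U = 0 := by
    simpa [hT'.charpoly_eq_X_pow_finrank] using (T : U →ₗ[𝕜] U).aeval_self_charpoly
  exact ContinuousLinearMap.coe_injective (by simpa using h)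

theorem Real.exists_one_add_pow_le_mul_exp (m : ℕ) {δ : ℝ} (hδ : 0 < δ) :
    ∃ K, ∀ x, 0 ≤ x → (1 + x) ^ m ≤ K * Real.exp (δ * x) := by
  refine ⟨m ! * Real.exp δ / δ ^ m, fun x hx => ?_⟩
  have h := Real.pow_div_factorial_le_exp (δ * (1 + x)) (by positivity) m
  rw [div_le_iff₀ (by positivity), mul_pow, mul_add, mul_one, Real.exp_add] at h
  rw [div_mul_eq_mul_div, le_div_iff₀ (by positivity)]
  linarith

theorem exists_norm_exp_mul_le {V U : Type*} [NormedAddCommGroup V] [NormedSpace ℝ V]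
    [FiniteDimensional ℝ V] [NormedAddCommGroup U] [NormedSpace ℂ U] [FiniteDimensional ℂ U]
    (Γ : V →ₗ[ℝ] (U →L[ℂ] U)) (lam : V →ₗ[ℝ] ℂ) {E : U →L[ℂ] U} (hE : IsIdempotentElem E)
    (hEcomm : ∀ Y, Commute E (Γ Y)) (hnil : ∀ Y, IsNilpotent (E * (Γ Y - lam Y • 1))) :
    ∃ K m, 0 ≤ K ∧ ∀ Y, ‖exp (Γ Y) * E‖ ≤ K * (1 + ‖Y‖) ^ m * Real.exp (lam Y).re := by
  let D : V →L[ℝ] (U →L[ℂ] U) :=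
    LinearMap.toContinuousLinearMap (LinearMap.mulLeft ℝ E ∘ₗ (Γ - lam.smulRight 1))
  set m := Module.finrank ℂ U
  refine ⟨m * (1 + ‖D‖) ^ m * ‖E‖, m, by positivity, fun Y => ?_⟩
  have hDY : ‖E * (Γ Y - lam Y • 1)‖ ≤ ‖D‖ * ‖Y‖ := D.le_opNorm Y
  calc ‖exp (Γ Y) * E‖ ≤ m * (1 + ‖E * (Γ Y - lam Y • 1)‖) ^ m * ‖E‖ * Real.exp (lam Y).re :=
        norm_exp_mul_le_of_isIdempotentElem (hEcomm Y).symm hE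
          (ContinuousLinearMap.pow_finrank_eq_zero_of_isNilpotent (hnil Y))
    _ ≤ m * ((1 + ‖D‖) * (1 + ‖Y‖)) ^ m * ‖E‖ * Real.exp (lam Y).re := by
        gcongr
        nlinarith [norm_nonneg D, norm_nonneg Y]
    _ = m * (1 + ‖D‖) ^ m * ‖E‖ * (1 + ‖Y‖) ^ m * Real.exp (lam Y).re := by
        rw [mul_pow]; ring

section DecayingDerivative
variable {F : Type*} [NormedAddCommGroup F] [NormedSpace ℝ F] [CompleteSpace F]

theorem exists_tendsto_atTop_of_hasDerivAt_of_norm_le_exp {f f' : ℝ → F} {K δ : ℝ} (hδ : 0 < δ)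
    (hf : ∀ t, HasDerivAt f (f' t) t) (hf' : ∀ t ≥ 0, ‖f' t‖ ≤ K * Real.exp (-δ * t)) :
    ∃ L, Tendsto f atTop (𝓝 L) := by
  have hderiv : f' = deriv f := funext fun t => (hf t).deriv.symm
  have hint : IntegrableOn f' (Ioi 0) := by
    refine Integrable.mono' ((exp_neg_integrableOn_Ioi 0 hδ).const_mul K)
      (hderiv ▸ (stronglyMeasurable_deriv f).aestronglyMeasurable) ?_
    filter_upwards [self_mem_ae_restrict measurableSet_Ioi] with t ht using hf' t (le_of_lt ht)
  exact ⟨_, tendsto_limUnder_of_hasDerivAt_of_integrableOn_Ioi (fun t _ => hf t) hint⟩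

theorem exists_tendsto_axes_of_hasDerivAt_of_norm_le_exp {G P₁ P₂ : ℝ → ℝ → F} {K δ : ℝ}
    (hδ : 0 < δ) (hG₁ : ∀ t₁ t₂, HasDerivAt (G · t₂) (P₁ t₁ t₂) t₁)
    (hG₂ : ∀ t₁ t₂, HasDerivAt (G t₁ ·) (P₂ t₁ t₂) t₂)
    (hP₁ : ∀ t₁ ≥ 0, ∀ t₂ ≥ 0, ‖P₁ t₁ t₂‖ ≤ K * Real.exp (-δ * (t₁ + t₂)))
    (hP₂ : ∀ t₁ ≥ 0, ∀ t₂ ≥ 0, ‖P₂ t₁ t₂‖ ≤ K * Real.exp (-δ * (t₁ + t₂))) :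
    ∃ L, Tendsto (G · 0) atTop (𝓝 L) ∧ Tendsto (G 0 ·) atTop (𝓝 L) := by
  obtain ⟨L₁, hL₁⟩ := exists_tendsto_atTop_of_hasDerivAt_of_norm_le_exp hδ (fun t => hG₁ t 0)
    fun t ht => by simpa using hP₁ t ht 0 le_rfl
  obtain ⟨L₂, hL₂⟩ := exists_tendsto_atTop_of_hasDerivAt_of_norm_le_exp hδ (hG₂ 0)
    fun t ht => by simpa using hP₂ 0 le_rfl t ht
  have hK : 0 ≤ K := by simpa using (norm_nonneg _).trans (hP₁ 0 le_rfl 0 le_rfl)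
  have hsquare : ∀ T ≥ 0, ‖G T 0 - G 0 T‖ ≤ 2 * K * (T * Real.exp (-δ * T)) := by
    intro T hT
    have hexp : ∀ s ≥ 0, K * Real.exp (-δ * (s + T)) ≤ K * Real.exp (-δ * T) := fun s hs =>
      mul_le_mul_of_nonneg_left (Real.exp_le_exp.mpr (by nlinarith)) hK
    have h₁ := norm_image_sub_le_of_norm_deriv_le_segment' (fun s _ => (hG₁ s T).hasDerivWithinAt)
      (fun s hs => (hP₁ s hs.1 T hT).trans (hexp s hs.1)) T ⟨hT, le_rfl⟩
    have h₂ := norm_image_sub_le_of_norm_deriv_le_segment' (fun s _ => (hG₂ T s).hasDerivWithinAt)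
      (fun s hs => (hP₂ T hT s hs.1).trans (by rw [add_comm]; exact hexp s hs.1)) T ⟨hT, le_rfl⟩
    calc ‖G T 0 - G 0 T‖ = ‖(G T T - G 0 T) - (G T T - G T 0)‖ := by congr 1; abel
      _ ≤ ‖G T T - G 0 T‖ + ‖G T T - G T 0‖ := norm_sub_le _ _
      _ ≤ 2 * K * (T * Real.exp (-δ * T)) := by linarith
  have hdecay : Tendsto (fun T => 2 * K * (T * Real.exp (-δ * T))) atTop (𝓝 0) := by
    simpa using (tendsto_rpow_mul_exp_neg_mul_atTop_nhds_zero 1 δ hδ).const_mul (2 * K)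
  have hdiff : Tendsto (fun T => G T 0 - G 0 T) atTop (𝓝 0) :=
    squeeze_zero_norm' (eventually_ge_atTop 0 |>.mono hsquare) hdecay
  refine ⟨L₁, hL₁, ?_⟩
  rwa [sub_eq_zero.mp (tendsto_nhds_unique (hL₁.sub hL₂) hdiff)]

end DecayingDerivative

theorem hasDerivAt_comp_add_smul {V W : Type*} [NormedAddCommGroup V] [NormedSpace ℝ V]
    [NormedAddCommGroup W] [NormedSpace ℝ W] {Φ : V → W} (hΦ : Differentiable ℝ Φ)
    (c X : V) (t : ℝ) :
    HasDerivAt (fun s : ℝ => Φ (c + s • X)) (fderiv ℝ Φ (c + t • X) X) t := by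
  have hline : HasDerivAt (fun s : ℝ => c + s • X) X t := by
    simpa using ((hasDerivAt_id t).smul_const X).const_add c
  exact (hΦ _).hasFDerivAt.comp_hasDerivAt t hline

theorem hasDerivAt_comp_add_smul_of_deriv_eq {V W : Type*} [NormedAddCommGroup V]
    [NormedSpace ℝ V] [NormedAddCommGroup W] [NormedSpace ℝ W] {Φ F : V → W}
    (hΦ : Differentiable ℝ Φ) {X : V} (h : ∀ b, deriv (fun s : ℝ => Φ (b + s • X)) 0 = F b)
    (c : V) (t : ℝ) : HasDerivAt (fun s : ℝ => Φ (c + s • X)) (F (c + t • X)) t := by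
  have h₀ := (hasDerivAt_comp_add_smul hΦ (c + t • X) X 0).deriv
  rw [h, zero_smul, add_zero] at h₀
  exact h₀ ▸ hasDerivAt_comp_add_smul hΦ c X t

section ComplexLinear
variable {U : Type*} [NormedAddCommGroup U] [NormedSpace ℂ U]

theorem HasDerivAt.complexCLM_apply {V : Type*} [NormedAddCommGroup V] [NormedSpace ℂ V]
    {c : ℝ → U →L[ℂ] V} {c' : U →L[ℂ] V} {u : ℝ → U} {u' : U} {t : ℝ}
    (hc : HasDerivAt c c' t) (hu : HasDerivAt u u' t) :
    HasDerivAt (fun s => c s (u s)) (c' (u t) + c t u') t := by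
  simpa using ((ContinuousLinearMap.restrictScalarsL ℂ U V ℝ ℝ).hasFDerivAt.comp_hasDerivAt t
    hc).clm_apply hu

variable [CompleteSpace U]

theorem HasDerivAt.exp_neg_smul_mul_apply {A T : U →L[ℂ] U} (hTA : Commute T A) {f : ℝ → U}
    {g : U} {t : ℝ} (hf : HasDerivAt f (A (f t) + g) t) :
    HasDerivAt (fun s : ℝ => (NormedSpace.exp ((-s : ℂ) • A) * T) (f s))
      ((NormedSpace.exp ((-t : ℂ) • A) * T) g) t := by
  have hsmul : ∀ s : ℝ, (-s : ℂ) • A = s • -A := fun s => by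
    rw [smul_neg, ← Complex.coe_smul, neg_smul]
  have hexp : HasDerivAt (fun s : ℝ => NormedSpace.exp ((-s : ℂ) • A) * T)
      (NormedSpace.exp ((-t : ℂ) • A) * -A * T) t := by
    simp only [hsmul]
    exact (hasDerivAt_exp_smul_const (-A) t).mul_const T
  convert hexp.complexCLM_apply hf using 1
  simp only [mul_apply_eq_comp, neg_apply, map_add, map_neg,
    ← mul_apply_eq_comp T A, hTA.eq]
  abel

end ComplexLinear

section Twisted
variable {V U : Type*} [NormedAddCommGroup V] [NormedSpace ℝ V] [NormedAddCommGroup U]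
  [NormedSpace ℂ U]

noncomputable def expTwisted (A₁ A₂ E : U →L[ℂ] U) (X₁ X₂ a : V) (Φ : V → U) (t₁ t₂ : ℝ) : U :=
  (exp ((-t₁ : ℂ) • A₁) * exp ((-t₂ : ℂ) • A₂) * E) (Φ (a + t₁ • X₁ + t₂ • X₂))

variable [CompleteSpace U] {A₁ A₂ E : U →L[ℂ] U} {X₁ X₂ a : V} {Φ Ψ : V → U}

theorem hasDerivAt_expTwisted_fst (h₁₂ : Commute A₁ A₂) (hE : Commute E A₁)
    (hΦ : Differentiable ℝ Φ) (hode : ∀ b, deriv (fun s : ℝ => Φ (b + s • X₁)) 0 = A₁ (Φ b) + Ψ b)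
    (t₁ t₂ : ℝ) :
    HasDerivAt (expTwisted A₁ A₂ E X₁ X₂ a Φ · t₂) (expTwisted A₁ A₂ E X₁ X₂ a Ψ t₁ t₂) t₁ := by
  have hT : Commute (exp ((-t₂ : ℂ) • A₂) * E) A₁ := (h₁₂.symm.smul_left _).exp_left.mul_left hE
  have := (hasDerivAt_comp_add_smul_of_deriv_eq hΦ hode (a + t₂ • X₂) t₁).exp_neg_smul_mul_apply hT
  simpa only [expTwisted, mul_assoc, add_right_comm _ (t₂ • X₂)] using this

theorem hasDerivAt_expTwisted_snd (hE : Commute E A₂) (hΦ : Differentiable ℝ Φ)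
    (hode : ∀ b, deriv (fun s : ℝ => Φ (b + s • X₂)) 0 = A₂ (Φ b) + Ψ b) (t₁ t₂ : ℝ) :
    HasDerivAt (expTwisted A₁ A₂ E X₁ X₂ a Φ t₁ ·) (expTwisted A₁ A₂ E X₁ X₂ a Ψ t₁ t₂) t₂ := by
  have := (hasDerivAt_const t₂ (exp ((-t₁ : ℂ) • A₁))).complexCLM_apply
    ((hasDerivAt_comp_add_smul_of_deriv_eq hΦ hode (a + t₁ • X₁) t₂).exp_neg_smul_mul_apply hE)
  simpa [expTwisted, mul_assoc] using this

end Twisted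

theorem exp_neg_smul_mul_exp_neg_smul {V U : Type*} [AddCommGroup V] [Module ℝ V]
    [NormedAddCommGroup U] [NormedSpace ℂ U] [CompleteSpace U] (Γ : V →ₗ[ℝ] (U →L[ℂ] U))
    {X₁ X₂ : V} (h : Commute (Γ X₁) (Γ X₂)) (t₁ t₂ : ℝ) :
    exp ((-t₁ : ℂ) • Γ X₁) * exp ((-t₂ : ℂ) • Γ X₂) = exp (Γ (-(t₁ • X₁ + t₂ • X₂))) := by
  let _ : NormedAlgebra ℚ (U →L[ℂ] U) := .restrictScalars ℚ ℂ _
  rw [← exp_add_of_commute ((h.smul_left _).smul_right _)]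
  simp only [map_neg, map_add, map_smul, ← Complex.coe_smul, neg_smul, neg_add]

theorem norm_expTwisted_le {V U : Type*} [NormedAddCommGroup V] [NormedSpace ℝ V]
    [NormedAddCommGroup U] [NormedSpace ℂ U] [CompleteSpace U] (Γ : V →ₗ[ℝ] (U →L[ℂ] U))
    {X₁ X₂ : V} (h : Commute (Γ X₁) (Γ X₂)) (E : U →L[ℂ] U) (a : V) (Ψ : V → U) (t₁ t₂ : ℝ) :
    ‖expTwisted (Γ X₁) (Γ X₂) E X₁ X₂ a Ψ t₁ t₂‖
      ≤ ‖exp (Γ (-(t₁ • X₁ + t₂ • X₂))) * E‖ * ‖Ψ (a + t₁ • X₁ + t₂ • X₂)‖ := by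
  rw [expTwisted, exp_neg_smul_mul_exp_neg_smul Γ h]
  exact ContinuousLinearMap.le_opNorm _ _

theorem exists_norm_expTwisted_le {V U : Type*} [NormedAddCommGroup V] [NormedSpace ℝ V]
    [FiniteDimensional ℝ V] [NormedAddCommGroup U] [NormedSpace ℂ U] [FiniteDimensional ℂ U]
    (Γ : V →ₗ[ℝ] (U →L[ℂ] U)) (lam : V →ₗ[ℝ] ℂ) {E : U →L[ℂ] U} (hE : IsIdempotentElem E)
    (hEcomm : ∀ Y, Commute E (Γ Y)) (hnil : ∀ Y, IsNilpotent (E * (Γ Y - lam Y • 1)))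
    {X₁ X₂ : V} (h₁₂ : Commute (Γ X₁) (Γ X₂)) (a : V) {C ε : ℝ} (hC : 0 ≤ C) (hε : 0 < ε)
    (N : ℕ) :
    ∃ K, ∀ Ψ : V → U, (∀ t₁ ≥ (0 : ℝ), ∀ t₂ ≥ (0 : ℝ), ‖Ψ (a + t₁ • X₁ + t₂ • X₂)‖
        ≤ C * (1 + t₁ + t₂) ^ N * Real.exp ((lam (t₁ • X₁ + t₂ • X₂)).re)
          * Real.exp (-ε * (t₁ + t₂))) →
      ∀ t₁ ≥ (0 : ℝ), ∀ t₂ ≥ (0 : ℝ),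
        ‖expTwisted (Γ X₁) (Γ X₂) E X₁ X₂ a Ψ t₁ t₂‖ ≤ K * Real.exp (-(ε / 2) * (t₁ + t₂)) := by
  obtain ⟨K, m, hK, hgrowth⟩ := exists_norm_exp_mul_le Γ lam hE hEcomm hnil
  obtain ⟨K', hK'⟩ := Real.exists_one_add_pow_le_mul_exp (m + N) (half_pos hε)
  set c := ‖X₁‖ + ‖X₂‖
  refine ⟨K * (1 + c) ^ m * C * K', fun Ψ hΨ t₁ ht₁ t₂ ht₂ => ?_⟩
  set Y := t₁ • X₁ + t₂ • X₂
  have hY : 1 + ‖-Y‖ ≤ (1 + c) * (1 + t₁ + t₂) := by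
    have : ‖-Y‖ ≤ t₁ * ‖X₁‖ + t₂ * ‖X₂‖ := by
      rw [norm_neg]
      refine (norm_add_le _ _).trans_eq ?_
      rw [norm_smul, norm_smul, Real.norm_of_nonneg ht₁, Real.norm_of_nonneg ht₂]
    nlinarith [norm_nonneg X₁, norm_nonneg X₂]
  have hre : Real.exp (lam (-Y)).re * Real.exp (lam Y).re = 1 := by
    rw [← Real.exp_add, map_neg, Complex.neg_re, neg_add_cancel, Real.exp_zero]
  have hhalf : Real.exp (ε / 2 * (t₁ + t₂)) * Real.exp (-ε * (t₁ + t₂))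
      = Real.exp (-(ε / 2) * (t₁ + t₂)) := by
    rw [← Real.exp_add]; ring_nf
  calc ‖expTwisted (Γ X₁) (Γ X₂) E X₁ X₂ a Ψ t₁ t₂‖
      ≤ (K * (1 + ‖-Y‖) ^ m * Real.exp (lam (-Y)).re) * (C * (1 + t₁ + t₂) ^ N
          * Real.exp (lam Y).re * Real.exp (-ε * (t₁ + t₂))) :=
        (norm_expTwisted_le Γ h₁₂ E a Ψ t₁ t₂).trans <| mul_le_mul (hgrowth _)
          (hΨ t₁ ht₁ t₂ ht₂) (norm_nonneg _) ((norm_nonneg _).trans (hgrowth _))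
    _ = K * (1 + ‖-Y‖) ^ m * C * (1 + t₁ + t₂) ^ N * Real.exp (-ε * (t₁ + t₂)) := by
        linear_combination
          (K * (1 + ‖-Y‖) ^ m * C * (1 + t₁ + t₂) ^ N * Real.exp (-ε * (t₁ + t₂))) * hre
    _ ≤ K * ((1 + c) * (1 + t₁ + t₂)) ^ m * C * (1 + t₁ + t₂) ^ N
          * Real.exp (-ε * (t₁ + t₂)) := by gcongr
    _ = K * (1 + c) ^ m * C * (1 + (t₁ + t₂)) ^ (m + N) * Real.exp (-ε * (t₁ + t₂)) := by
        rw [mul_pow, pow_add, ← add_assoc]; ring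
    _ ≤ K * (1 + c) ^ m * C * (K' * Real.exp (ε / 2 * (t₁ + t₂)))
          * Real.exp (-ε * (t₁ + t₂)) := by
        gcongr
        exact hK' _ (add_nonneg ht₁ ht₂)
    _ = K * (1 + c) ^ m * C * K' * Real.exp (-(ε / 2) * (t₁ + t₂)) := by
        linear_combination (K * (1 + c) ^ m * C * K') * hhalf

theorem constant_term_limit_independent_of_direction_general
    (U : Type*) [NormedAddCommGroup U] [NormedSpace ℂ U] [FiniteDimensional ℂ U]
    (d : ℕ)
    (Γ : EuclideanSpace ℝ (Fin d) →ₗ[ℝ] (U →L[ℂ] U))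
    (hcomm : ∀ X Y : EuclideanSpace ℝ (Fin d), Commute (Γ X) (Γ Y))
    (lam : EuclideanSpace ℝ (Fin d) →ₗ[ℝ] ℂ)
    (E : U →L[ℂ] U) (hE : IsIdempotentElem E)
    (hEcomm : ∀ X : EuclideanSpace ℝ (Fin d), Commute E (Γ X))
    (hnil : ∀ X : EuclideanSpace ℝ (Fin d),
      IsNilpotent (E * (Γ X - lam X • (1 : U →L[ℂ] U))))
    (X₁ X₂ a : EuclideanSpace ℝ (Fin d))
    (Φ : EuclideanSpace ℝ (Fin d) → U) (hΦ : Differentiable ℝ Φ)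
    (Ψ₁ Ψ₂ : EuclideanSpace ℝ (Fin d) → U)
    (hode₁ : ∀ b : EuclideanSpace ℝ (Fin d),
      deriv (fun s : ℝ => Φ (b + s • X₁)) 0 = Γ X₁ (Φ b) + Ψ₁ b)
    (hode₂ : ∀ b : EuclideanSpace ℝ (Fin d),
      deriv (fun s : ℝ => Φ (b + s • X₂)) 0 = Γ X₂ (Φ b) + Ψ₂ b)
    (C ε : ℝ) (hC : 0 < C) (hε : 0 < ε) (N : ℕ)
    (hbound₁ : ∀ t₁ ≥ (0:ℝ), ∀ t₂ ≥ (0:ℝ),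
      ‖Ψ₁ (a + t₁ • X₁ + t₂ • X₂)‖
        ≤ C * (1 + t₁ + t₂) ^ N * Real.exp ((lam (t₁ • X₁ + t₂ • X₂)).re)
          * Real.exp (-ε * (t₁ + t₂)))
    (hbound₂ : ∀ t₁ ≥ (0:ℝ), ∀ t₂ ≥ (0:ℝ),
      ‖Ψ₂ (a + t₁ • X₁ + t₂ • X₂)‖
        ≤ C * (1 + t₁ + t₂) ^ N * Real.exp ((lam (t₁ • X₁ + t₂ • X₂)).re)
          * Real.exp (-ε * (t₁ + t₂))) :
    ∃ L₁ L₂ : U,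
      Tendsto (fun t : ℝ =>
          (NormedSpace.exp ((-t : ℂ) • Γ X₁)) (E (Φ (a + t • X₁)))) atTop (nhds L₁) ∧
      Tendsto (fun t : ℝ =>
          (NormedSpace.exp ((-t : ℂ) • Γ X₂)) (E (Φ (a + t • X₂)))) atTop (nhds L₂) ∧
      L₁ = L₂ := by
  obtain ⟨K, hK⟩ := exists_norm_expTwisted_le Γ lam hE hEcomm hnil (hcomm X₁ X₂) a hC.le hε N
  obtain ⟨L, h₁, h₂⟩ := exists_tendsto_axes_of_hasDerivAt_of_norm_le_exp (half_pos hε)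
    (hasDerivAt_expTwisted_fst (a := a) (hcomm X₁ X₂) (hEcomm X₁) hΦ hode₁)
    (hasDerivAt_expTwisted_snd (A₁ := Γ X₁) (X₁ := X₁) (a := a) (hEcomm X₂) hΦ hode₂)
    (hK Ψ₁ hbound₁) (hK Ψ₂ hbound₂)
  refine ⟨L, L, ?_, ?_, rfl⟩
  · simpa [expTwisted] using h₁
  · simpa [expTwisted] using h₂

/-- Independence of the limit defining the constant term from the chosen direction.
Under the differential system `D_{X_i}Φ = Γ(X_i)Φ + Ψ_i` with rapidly decaying (relatively to
`e^{Re λ}`) inhomogeneous terms, the limits `lim_{t→∞} e^{−tΓ(X_i)} E Φ(a + tX_i)` exist for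
`i = 1, 2` and coincide. -/
theorem constant_term_limit_independent_of_direction
    (U : Type*) [NormedAddCommGroup U] [NormedSpace ℂ U] [FiniteDimensional ℂ U]
    (d : ℕ) (hd : 1 ≤ d)
    (Γ : EuclideanSpace ℝ (Fin d) →ₗ[ℝ] (U →L[ℂ] U))
    (hcomm : ∀ X Y : EuclideanSpace ℝ (Fin d), Commute (Γ X) (Γ Y))
    (lam : EuclideanSpace ℝ (Fin d) →ₗ[ℝ] ℂ)
    (E : U →L[ℂ] U) (hE : IsIdempotentElem E)
    (hEcomm : ∀ X : EuclideanSpace ℝ (Fin d), Commute E (Γ X))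
    (hnil : ∀ X : EuclideanSpace ℝ (Fin d),
      IsNilpotent (E * (Γ X - lam X • (1 : U →L[ℂ] U))))
    (X₁ X₂ a : EuclideanSpace ℝ (Fin d))
    (Φ : EuclideanSpace ℝ (Fin d) → U) (hΦ : Differentiable ℝ Φ)
    (Ψ₁ Ψ₂ : EuclideanSpace ℝ (Fin d) → U) (hΨ₁c : Continuous Ψ₁) (hΨ₂c : Continuous Ψ₂)
    (hode₁ : ∀ b : EuclideanSpace ℝ (Fin d),
      deriv (fun s : ℝ => Φ (b + s • X₁)) 0 = Γ X₁ (Φ b) + Ψ₁ b)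
    (hode₂ : ∀ b : EuclideanSpace ℝ (Fin d),
      deriv (fun s : ℝ => Φ (b + s • X₂)) 0 = Γ X₂ (Φ b) + Ψ₂ b)
    (C ε : ℝ) (hC : 0 < C) (hε : 0 < ε) (N : ℕ)
    (hbound₁ : ∀ t₁ ≥ (0:ℝ), ∀ t₂ ≥ (0:ℝ),
      ‖Ψ₁ (a + t₁ • X₁ + t₂ • X₂)‖
        ≤ C * (1 + t₁ + t₂) ^ N * Real.exp ((lam (t₁ • X₁ + t₂ • X₂)).re)
          * Real.exp (-ε * (t₁ + t₂)))
    (hbound₂ : ∀ t₁ ≥ (0:ℝ), ∀ t₂ ≥ (0:ℝ),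
      ‖Ψ₂ (a + t₁ • X₁ + t₂ • X₂)‖
        ≤ C * (1 + t₁ + t₂) ^ N * Real.exp ((lam (t₁ • X₁ + t₂ • X₂)).re)
          * Real.exp (-ε * (t₁ + t₂))) :
    ∃ L₁ L₂ : U,
      Tendsto (fun t : ℝ =>
          (NormedSpace.exp ((-t : ℂ) • Γ X₁)) (E (Φ (a + t • X₁)))) atTop (nhds L₁) ∧
      Tendsto (fun t : ℝ =>
          (NormedSpace.exp ((-t : ℂ) • Γ X₂)) (E (Φ (a + t • X₂)))) atTop (nhds L₂) ∧
      L₁ = L₂ :=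
  constant_term_limit_independent_of_direction_general U d Γ hcomm lam E hE hEcomm hnil X₁ X₂ a Φ hΦ
    Ψ₁ Ψ₂ hode₁ hode₂ C ε hC hε N hbound₁ hbound₂
end

section
/- Let U be a finite-dimensional complex normed vector space, d ≥ 1, and Γ : ℝ^d → End(U) an ℝ-linear map whose values pairwise commute. Let λ : ℝ^d → ℂ be ℝ-linear and let E ∈ End(U) be an idempotent commuting with Γ(X) for all X ∈ ℝ^d and such that E ∘ (Γ(X) − λ(X)·Id) is nilpotent for all X ∈ ℝ^d. Let X, Y, a ∈ ℝ^d, let Φ : ℝ^d → U be differentiable, and let Ψ_X, Ψ_Y : ℝ^d → U be continuous with D_XΦ(b) = Γ(X) Φ(b) + Ψ_X(b) and D_YΦ(b) = Γ(Y) Φ(b) + Ψ_Y(b) for all b ∈ ℝ^d. Assume there exist C, ε > 0 and N ∈ ℕ such that, for all s ∈ [0,1] and t ≥ 0, both ‖Ψ_X(a + sX + tY)‖ and ‖Ψ_Y(a + sX + tY)‖ are at most C (1+t)^N e^{Re λ(sX + tY)} e^{−ε t}. Then the limits v₀ = lim_{t→+∞} e^{−tΓ(Y)} E Φ(a + tY)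 and v₁ = lim_{t→+∞} e^{−tΓ(Y)} E Φ(a + X + tY) exist and satisfy v₁ = e^{Γ(X)} v₀. -/
/-!
Write `T t = exp (-t Γ(Y))`. By variation of constants, `t ↦ T t (E Φ(a + tY))` has derivative
`T t (E Ψ_Y(a + tY))`. Since `E (Γ(Y) - λ(Y))` is nilpotent, `‖T t E‖` is at most a polynomial
times `e^{-t Re λ(Y)}`, which cancels the exponential factor in the bound on `Ψ_Y`; the
derivative is therefore `O((1 + t)^M e^{-εt})`, hence integrable, and `v₀` exists. In the same way
`s ↦ T t (exp (-s Γ(X)) (E Φ(a + sX + tY)))` has derivative `O((1 + t)^M e^{-εt})` uniformly in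
`s ∈ [0, 1]`, so its values at `s = 0` and `s = 1` have the same limit as `t → ∞`. Applying
`exp Γ(X)`, which commutes with `T t`, gives `v₁ = exp Γ(X) v₀`.
-/

open Filter Topology Set MeasureTheory NormedSpace
open scoped Nat

theorem one_add_pow_mul_exp_neg_le (p : ℕ) {ε t : ℝ} (hε : 0 < ε) (ht : 0 ≤ t) :
    (1 + t) ^ p * Real.exp (-ε * t) ≤
      p ! * (2 / ε) ^ p * Real.exp (ε / 2) * Real.exp (-(ε / 2) * t) := by
  have h := Real.pow_div_factorial_le_exp (ε / 2 * (1 + t)) (by positivity) p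
  have hpow : (1 + t) ^ p = (2 / ε) ^ p * (ε / 2 * (1 + t)) ^ p := by
    rw [← mul_pow]; field_simp
  calc (1 + t) ^ p * Real.exp (-ε * t)
      = p ! * (2 / ε) ^ p * ((ε / 2 * (1 + t)) ^ p / p !) * Real.exp (-ε * t) := by
        rw [hpow]; field_simp
    _ ≤ p ! * (2 / ε) ^ p * Real.exp (ε / 2 * (1 + t)) * Real.exp (-ε * t) := by gcongr
    _ = p ! * (2 / ε) ^ p * Real.exp (ε / 2) * Real.exp (-(ε / 2) * t) := by
        rw [mul_assoc, ← Real.exp_add, mul_assoc _ (Real.exp _), ← Real.exp_add]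
        ring_nf

theorem integrableOn_one_add_pow_mul_exp_neg (p : ℕ) {ε : ℝ} (hε : 0 < ε) :
    IntegrableOn (fun t => (1 + t) ^ p * Real.exp (-ε * t)) (Ioi 0) := by
  refine ((exp_neg_integrableOn_Ioi 0 (half_pos hε)).const_mul
    (p ! * (2 / ε) ^ p * Real.exp (ε / 2))).mono' (by fun_prop) ?_
  refine (ae_restrict_iff' measurableSet_Ioi).2 (ae_of_all _ fun t (ht : 0 < t) => ?_)
  rw [Real.norm_of_nonneg (by positivity)]
  exact one_add_pow_mul_exp_neg_le p hε ht.le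

theorem tendsto_one_add_pow_mul_exp_neg_atTop_nhds_zero (p : ℕ) {ε : ℝ} (hε : 0 < ε) :
    Tendsto (fun t => (1 + t) ^ p * Real.exp (-ε * t)) atTop (𝓝 0) := by
  have hexp : Tendsto (fun t => Real.exp (-(ε / 2) * t)) atTop (𝓝 0) :=
    Real.tendsto_exp_atBot.comp (tendsto_id.const_mul_atTop_of_neg (by linarith))
  have hlim := hexp.const_mul (p ! * (2 / ε) ^ p * Real.exp (ε / 2))
  rw [mul_zero] at hlim
  refine squeeze_zero' ?_ ?_ hlim <;> filter_upwards [eventually_ge_atTop 0] with t ht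
  · positivity
  · exact one_add_pow_mul_exp_neg_le p hε ht

theorem exists_tendsto_atTop_of_hasDerivAt {F : Type*} [NormedAddCommGroup F] [NormedSpace ℝ F]
    [CompleteSpace F] {f f' : ℝ → F} {g : ℝ → ℝ} (hf : ∀ t, HasDerivAt f (f' t) t)
    (hg : IntegrableOn g (Ioi 0)) (hf'g : ∀ t ≥ 0, ‖f' t‖ ≤ g t) :
    ∃ v, Tendsto f atTop (𝓝 v) := by
  have hf' : f' = deriv f := funext fun t => (hf t).deriv.symm
  have hmeas : AEStronglyMeasurable f' (volume.restrict (Ioi 0)) :=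
    hf' ▸ aestronglyMeasurable_deriv f _
  refine ⟨_, tendsto_limUnder_of_hasDerivAt_of_integrableOn_Ioi (a := 0) (fun t _ => hf t) ?_⟩
  exact hg.mono' hmeas <|
    (ae_restrict_iff' measurableSet_Ioi).2 (ae_of_all _ fun t (ht : 0 < t) => hf'g t ht.le)

theorem hasDerivAt_apply_add_smul {V F : Type*} [NormedAddCommGroup V] [NormedSpace ℝ V]
    [NormedAddCommGroup F] [NormedSpace ℝ F] {Φ : V → F} (hΦ : Differentiable ℝ Φ) {Z : V}
    {G : V → F} (hG : ∀ b, deriv (fun s : ℝ => Φ (b + s • Z)) 0 = G b) (b : V) (s : ℝ) :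
    HasDerivAt (fun s : ℝ => Φ (b + s • Z)) (G (b + s • Z)) s := by
  have hline : ∀ c r, HasDerivAt (fun r : ℝ => Φ (c + r • Z)) (fderiv ℝ Φ (c + r • Z) Z) r :=
    fun c r => (hΦ _).hasFDerivAt.comp_hasDerivAt r
      (by simpa using ((hasDerivAt_id r).smul_const Z).const_add c)
  have hG' : G (b + s • Z) = fderiv ℝ Φ (b + s • Z) Z := by
    simpa [← hG] using (hline (b + s • Z) 0).deriv
  exact hG' ▸ hline b s

theorem growth_mul_decay_le {K C α β ε s t : ℝ} {n N : ℕ} (hK : 0 ≤ K) (hC : 0 ≤ C)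
    (hs : s ∈ Icc (0 : ℝ) 1) (ht : 0 ≤ t) :
    K * (1 + t) ^ n * Real.exp (-(t * β)) *
        (C * (1 + t) ^ N * Real.exp (s * α + t * β) * Real.exp (-ε * t)) ≤
      K * C * Real.exp |α| * ((1 + t) ^ (n + N) * Real.exp (-ε * t)) := by
  have hsα : s * α ≤ |α| :=
    (mul_le_mul_of_nonneg_left (le_abs_self α) hs.1).trans
      (mul_le_of_le_one_left (abs_nonneg α) hs.2)
  have hexp : Real.exp (-(t * β)) * Real.exp (s * α + t * β) = Real.exp (s * α) := by
    rw [← Real.exp_add]; ring_nf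
  calc _ = K * C * (Real.exp (-(t * β)) * Real.exp (s * α + t * β)) *
        ((1 + t) ^ (n + N) * Real.exp (-ε * t)) := by ring
    _ ≤ _ := by rw [hexp]; gcongr

section BanachAlgebra

variable {𝔸 : Type*} [NormedRing 𝔸]

theorem exp_smul_mul_eq_sum_range_of_pow_mul_eq_zero [NormedAlgebra ℝ 𝔸] [CompleteSpace 𝔸]
    {B E : 𝔸} {m : ℕ} (h : B ^ m * E = 0) (t : ℝ) :
    exp (t • B) * E = ∑ k ∈ Finset.range m, (t ^ k / k !) • (B ^ k * E) := by
  have hsum := (exp_series_hasSum_exp' (𝕂 := ℝ) (t • B)).mul_right E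
  simp only [smul_pow, smul_smul, smul_mul_assoc, ← div_eq_inv_mul] at hsum
  refine hsum.unique (hasSum_sum_of_ne_finset_zero fun k hk => ?_)
  obtain ⟨j, rfl⟩ := Nat.exists_eq_add_of_le' (not_lt.1 (Finset.mem_range.not.1 hk))
  rw [pow_add B, mul_assoc, h, mul_zero, smul_zero]

theorem norm_sum_pow_div_factorial_smul_le {F : Type*} [SeminormedAddCommGroup F]
    [NormedSpace ℝ F] (x : ℕ → F) (m : ℕ) {t : ℝ} (ht : 0 ≤ t) :
    ‖∑ k ∈ Finset.range m, (t ^ k / k !) • x k‖ ≤ (1 + t) ^ m * ∑ k ∈ Finset.range m, ‖x k‖ := by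
  rw [Finset.mul_sum]
  refine (norm_sum_le _ _).trans (Finset.sum_le_sum fun k hk => ?_)
  rw [norm_smul, Real.norm_of_nonneg (by positivity)]
  gcongr
  calc t ^ k / k ! ≤ t ^ k := div_le_self (by positivity) (Nat.one_le_cast.2 k.factorial_pos)
    _ ≤ (1 + t) ^ k := by gcongr; linarith
    _ ≤ (1 + t) ^ m := pow_le_pow_right₀ (by linarith) (Finset.mem_range.1 hk).le

variable [NormedAlgebra ℂ 𝔸] [CompleteSpace 𝔸]

theorem exists_norm_exp_smul_neg_mul_le {A E : 𝔸} {μ : ℂ} (hE : IsIdempotentElem E)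
    (hEA : Commute E A) (hnil : IsNilpotent (E * (A - μ • 1))) :
    ∃ n : ℕ, ∃ K ≥ 0, ∀ t ≥ (0 : ℝ),
      ‖exp (t • -A) * E‖ ≤ K * (1 + t) ^ n * Real.exp (-(t * μ.re)) := by
  let +nondep : NormedAlgebra ℚ 𝔸 := .restrictScalars ℚ ℂ 𝔸
  set C := A - μ • 1
  obtain ⟨m, hm⟩ := hnil
  have hCE : C ^ (m + 1) * E = 0 := by
    have hcomm : Commute E C := hEA.sub_right ((Commute.one_right E).smul_right μ)
    rw [← (hcomm.pow_right _).eq, ← hE.pow_succ_eq m, ← hcomm.mul_pow, pow_succ, hm, zero_mul]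
  have hCE' : (-C) ^ (m + 1) * E = 0 := by rw [neg_pow, mul_assoc, hCE, mul_zero]
  refine ⟨m + 1, ∑ k ∈ Finset.range (m + 1), ‖(-C) ^ k * E‖, by positivity, fun t ht => ?_⟩
  have hsplit : t • -A = algebraMap ℂ 𝔸 (-(t * μ)) + t • -C := by
    simp only [C, Algebra.algebraMap_eq_smul_one, smul_neg, smul_sub, ← Complex.coe_smul,
      smul_smul, neg_smul]
    abel
  rw [hsplit, exp_add_of_commute (Algebra.commutes _ _), ← algebraMap_exp_comm,
    ← Algebra.smul_def, smul_mul_assoc, norm_smul,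
    exp_smul_mul_eq_sum_range_of_pow_mul_eq_zero hCE', ← Complex.exp_eq_exp_ℂ, Complex.norm_exp,
    Complex.neg_re, Complex.re_ofReal_mul]
  calc _ ≤ Real.exp (-(t * μ.re)) *
        ((1 + t) ^ (m + 1) * ∑ k ∈ Finset.range (m + 1), ‖(-C) ^ k * E‖) := by
        gcongr; exact norm_sum_pow_div_factorial_smul_le _ _ ht
    _ = _ := by ring

theorem exists_norm_exp_smul_neg_mul_exp_smul_neg_mul_le {A B E : 𝔸} {μ : ℂ}
    (hE : IsIdempotentElem E) (hEA : Commute E A) (hEB : Commute E B)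
    (hnil : IsNilpotent (E * (B - μ • 1))) :
    ∃ n : ℕ, ∃ K ≥ 0, ∀ s ∈ Icc (0 : ℝ) 1, ∀ t ≥ (0 : ℝ),
      ‖exp (t • -B) * exp (s • -A) * E‖ ≤ K * (1 + t) ^ n * Real.exp (-(t * μ.re)) := by
  obtain ⟨n, K, hK, hKb⟩ := exists_norm_exp_smul_neg_mul_le hE hEB hnil
  obtain ⟨M, hM⟩ := isCompact_Icc.exists_bound_of_continuousOn
    (differentiable_exp_smul_const ℝ (-A)).continuous.continuousOn
  have hM0 : 0 ≤ M := (norm_nonneg _).trans (hM 0 ⟨le_rfl, zero_le_one⟩)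
  refine ⟨n, K * M * ‖E‖, by positivity, fun s hs t ht => ?_⟩
  have hfactor : exp (t • -B) * exp (s • -A) * E = exp (t • -B) * E * (exp (s • -A) * E) := by
    rw [mul_assoc (exp (t • -B)) E, ← mul_assoc E, ((hEA.neg_right.smul_right s).exp_right).eq,
      mul_assoc _ E E, hE.eq, mul_assoc]
  calc ‖exp (t • -B) * exp (s • -A) * E‖
      ≤ ‖exp (t • -B) * E‖ * (‖exp (s • -A)‖ * ‖E‖) := by
        rw [hfactor]; exact (norm_mul_le _ _).trans (by gcongr; exact norm_mul_le _ _)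
    _ ≤ K * (1 + t) ^ n * Real.exp (-(t * μ.re)) * (M * ‖E‖) := by
        gcongr
        · exact hKb t ht
        · exact hM s hs
    _ = K * M * ‖E‖ * (1 + t) ^ n * Real.exp (-(t * μ.re)) := by ring

end BanachAlgebra

section Operators

variable {U : Type*} [NormedAddCommGroup U] [NormedSpace ℂ U]

theorem exp_neg_ofReal_smul (t : ℝ) (A : U →L[ℂ] U) :
    exp ((-t : ℂ) • A) = exp (t • -A) := by
  rw [neg_smul, Complex.coe_smul, smul_neg]

theorem hasDerivAt_apply_apply_add_smul {V : Type*} [NormedAddCommGroup V] [NormedSpace ℝ V]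
    {Φ : V → U} (hΦ : Differentiable ℝ Φ) {Z : V} {Γ E : U →L[ℂ] U} {Ψ : V → U}
    (hEΓ : Commute E Γ) (hode : ∀ b, deriv (fun s : ℝ => Φ (b + s • Z)) 0 = Γ (Φ b) + Ψ b)
    (b : V) (s : ℝ) :
    HasDerivAt (fun s : ℝ => E (Φ (b + s • Z)))
      (Γ (E (Φ (b + s • Z))) + E (Ψ (b + s • Z))) s := by
  have hcomm : E (Γ (Φ (b + s • Z))) = Γ (E (Φ (b + s • Z))) := DFunLike.congr_fun hEΓ.eq _
  exact ((E.restrictScalars ℝ).hasFDerivAt.comp_hasDerivAt s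
    (hasDerivAt_apply_add_smul hΦ hode b s)).congr_deriv (by simp [hcomm])

variable [CompleteSpace U]

theorem hasDerivAt_exp_smul_neg_apply {A : U →L[ℂ] U} {u : ℝ → U} {w : U} {t : ℝ}
    (hu : HasDerivAt u (A (u t) + w) t) :
    HasDerivAt (fun s : ℝ => exp (s • -A) (u s)) (exp (t • -A) w) t := by
  have hT := (ContinuousLinearMap.restrictScalarsL ℂ U U ℝ ℝ).hasFDerivAt.comp_hasDerivAt t
    (hasDerivAt_exp_smul_const (-A) t)
  refine (hT.clm_apply hu).congr_deriv ?_
  simp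

theorem exists_tendsto_exp_smul_neg_apply_of_decay {A B : U →L[ℂ] U} (hAB : Commute A B)
    {u p : ℝ → ℝ → U} {q : ℝ → U} {β : ℝ → ℝ}
    (hu_s : ∀ s t, HasDerivAt (u · t) (A (u s t) + p s t) s)
    (hu_t : ∀ t, HasDerivAt (u 0) (B (u 0 t) + q t) t)
    (hp : ∀ s ∈ Icc (0 : ℝ) 1, ∀ t ≥ (0 : ℝ), ‖exp (t • -B) (exp (s • -A) (p s t))‖ ≤ β t)
    (hq : ∀ t ≥ (0 : ℝ), ‖exp (t • -B) (q t)‖ ≤ β t)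
    (hβ_int : IntegrableOn β (Ioi 0)) (hβ_lim : Tendsto β atTop (𝓝 0)) :
    ∃ v, Tendsto (fun t => exp (t • -B) (u 0 t)) atTop (𝓝 v) ∧
      Tendsto (fun t => exp (t • -B) (u 1 t)) atTop (𝓝 (exp A v)) := by
  obtain ⟨v, hv⟩ := exists_tendsto_atTop_of_hasDerivAt
    (fun t => hasDerivAt_exp_smul_neg_apply (hu_t t)) hβ_int hq
  have hdiff : ∀ t ≥ (0 : ℝ),
      ‖exp (t • -B) (exp (-A) (u 1 t)) - exp (t • -B) (u 0 t)‖ ≤ β t := by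
    intro t ht
    have hF : ∀ s, HasDerivAt (fun s => exp (t • -B) (exp (s • -A) (u s t)))
        (exp (t • -B) (exp (s • -A) (p s t))) s := fun s =>
      ((exp (t • -B)).restrictScalars ℝ).hasFDerivAt.comp_hasDerivAt s
        (hasDerivAt_exp_smul_neg_apply (hu_s s t))
    simpa using norm_image_sub_le_of_norm_deriv_le_segment' (fun s _ => (hF s).hasDerivWithinAt)
      (fun s hs => hp s (Ico_subset_Icc_self hs) t ht) 1 (right_mem_Icc.2 zero_le_one)
  have h₁ : Tendsto (fun t => exp (t • -B) (exp (-A) (u 1 t))) atTop (𝓝 v) := by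
    simpa using hv.add (squeeze_zero_norm' ((eventually_ge_atTop 0).mono hdiff) hβ_lim)
  refine ⟨v, hv, (((exp A).continuous.tendsto v).comp h₁).congr fun t => ?_⟩
  let +nondep : NormedAlgebra ℚ (U →L[ℂ] U) := .restrictScalars ℚ ℂ _
  have hcomm : Commute (exp A) (exp (t • -B)) := (hAB.neg_right.smul_right t).exp
  simp only [Function.comp_apply, ← mul_apply_eq_comp, ← mul_assoc, hcomm.eq]
  rw [mul_assoc, ← exp_add_of_commute (Commute.refl A).neg_right, add_neg_cancel, exp_zero,
    mul_one]

theorem exists_norm_exp_smul_neg_apply_exp_smul_neg_apply_le {A B E : U →L[ℂ] U} {μ : ℂ}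
    (hE : IsIdempotentElem E) (hEA : Commute E A) (hEB : Commute E B)
    (hnil : IsNilpotent (E * (B - μ • 1))) {C α ε : ℝ} (hC : 0 ≤ C) (N : ℕ) :
    ∃ n : ℕ, ∃ K, ∀ s ∈ Icc (0 : ℝ) 1, ∀ t ≥ (0 : ℝ), ∀ v : U,
      ‖v‖ ≤ C * (1 + t) ^ N * Real.exp (s * α + t * μ.re) * Real.exp (-ε * t) →
      ‖exp (t • -B) (exp (s • -A) (E v))‖ ≤ K * ((1 + t) ^ n * Real.exp (-ε * t)) := by
  obtain ⟨n, K, hK, hKb⟩ := exists_norm_exp_smul_neg_mul_exp_smul_neg_mul_le hE hEA hEB hnil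
  refine ⟨n + N, K * C * Real.exp |α|, fun s hs t ht v hv => ?_⟩
  calc _ ≤ ‖exp (t • -B) * exp (s • -A) * E‖ * ‖v‖ :=
        (exp (t • -B) * exp (s • -A) * E).le_opNorm v
    _ ≤ _ := (mul_le_mul (hKb s hs t ht) hv (norm_nonneg v) (by positivity)).trans
        (growth_mul_decay_le hK hC hs ht)

end Operators

theorem constant_term_limit_equivariance_general
    (U : Type*) [NormedAddCommGroup U] [NormedSpace ℂ U] [FiniteDimensional ℂ U]
    (d : ℕ)
    (Γ : EuclideanSpace ℝ (Fin d) →ₗ[ℝ] (U →L[ℂ] U))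
    (hcomm : ∀ X Y : EuclideanSpace ℝ (Fin d), Commute (Γ X) (Γ Y))
    (lam : EuclideanSpace ℝ (Fin d) →ₗ[ℝ] ℂ)
    (E : U →L[ℂ] U) (hE : IsIdempotentElem E)
    (hEcomm : ∀ X : EuclideanSpace ℝ (Fin d), Commute E (Γ X))
    (hnil : ∀ X : EuclideanSpace ℝ (Fin d),
      IsNilpotent (E * (Γ X - lam X • (1 : U →L[ℂ] U))))
    (X Y a : EuclideanSpace ℝ (Fin d))
    (Φ : EuclideanSpace ℝ (Fin d) → U) (hΦ : Differentiable ℝ Φ)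
    (ΨX ΨY : EuclideanSpace ℝ (Fin d) → U)
    (hodeX : ∀ b : EuclideanSpace ℝ (Fin d),
      deriv (fun s : ℝ => Φ (b + s • X)) 0 = Γ X (Φ b) + ΨX b)
    (hodeY : ∀ b : EuclideanSpace ℝ (Fin d),
      deriv (fun s : ℝ => Φ (b + s • Y)) 0 = Γ Y (Φ b) + ΨY b)
    (C ε : ℝ) (hC : 0 < C) (hε : 0 < ε) (N : ℕ)
    (hbound : ∀ s ∈ Set.Icc (0:ℝ) 1, ∀ t ≥ (0:ℝ),
      ‖ΨX (a + s • X + t • Y)‖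
        ≤ C * (1 + t) ^ N * Real.exp ((lam (s • X + t • Y)).re) * Real.exp (-ε * t) ∧
      ‖ΨY (a + s • X + t • Y)‖
        ≤ C * (1 + t) ^ N * Real.exp ((lam (s • X + t • Y)).re) * Real.exp (-ε * t)) :
    ∃ v₀ v₁ : U,
      Tendsto (fun t : ℝ =>
          (NormedSpace.exp ((-t : ℂ) • Γ Y)) (E (Φ (a + t • Y)))) atTop (nhds v₀) ∧
      Tendsto (fun t : ℝ =>
          (NormedSpace.exp ((-t : ℂ) • Γ Y)) (E (Φ (a + X + t • Y)))) atTop (nhds v₁) ∧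
      v₁ = (NormedSpace.exp (Γ X)) v₀ := by
  obtain ⟨n, K, hdecay⟩ := exists_norm_exp_smul_neg_apply_exp_smul_neg_apply_le hE (hEcomm X)
    (hEcomm Y) (hnil Y) (α := (lam X).re) (ε := ε) hC.le N
  have hre : ∀ s t : ℝ, (lam (s • X + t • Y)).re = s * (lam X).re + t * (lam Y).re := by
    simp [Complex.real_smul]
  have hq : ∀ t ≥ (0 : ℝ),
      ‖exp (t • -Γ Y) (E (ΨY (a + t • Y)))‖ ≤ K * ((1 + t) ^ n * Real.exp (-ε * t)) :=
    fun t ht => by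
      have hΨY := (hbound 0 ⟨le_rfl, zero_le_one⟩ t ht).2
      rw [hre, zero_smul, add_zero] at hΨY
      simpa using hdecay 0 ⟨le_rfl, zero_le_one⟩ t ht _ hΨY
  obtain ⟨v₀, h₀, h₁⟩ := exists_tendsto_exp_smul_neg_apply_of_decay (hcomm X Y)
    (u := fun s t => E (Φ (a + t • Y + s • X)))
    (fun s t => hasDerivAt_apply_apply_add_smul hΦ (hEcomm X) hodeX _ s)
    (fun t => by simpa using hasDerivAt_apply_apply_add_smul hΦ (hEcomm Y) hodeY a t)
    (fun s hs t ht => hdecay s hs t ht _ <| by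
      rw [add_right_comm, ← hre]; exact (hbound s hs t ht).1)
    hq ((integrableOn_one_add_pow_mul_exp_neg n hε).const_mul _)
    (by simpa using (tendsto_one_add_pow_mul_exp_neg_atTop_nhds_zero n hε).const_mul _)
  refine ⟨v₀, _, ?_, ?_, rfl⟩ <;> simp_rw [exp_neg_ofReal_smul]
  · simpa using h₀
  · simpa [add_right_comm] using h₁

/-- Equivariance of the constant term limit: under the differential system
`D_XΦ = Γ(X)Φ + Ψ_X`, `D_YΦ = Γ(Y)Φ + Ψ_Y` with suitable decay of the inhomogeneous terms,
the limits `v₀ = lim_{t→∞} e^{−tΓ(Y)} E Φ(a + tY)` and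
`v₁ = lim_{t→∞} e^{−tΓ(Y)} E Φ(a + X + tY)` exist and satisfy `v₁ = e^{Γ(X)} v₀`. -/
theorem constant_term_limit_equivariance
    (U : Type*) [NormedAddCommGroup U] [NormedSpace ℂ U] [FiniteDimensional ℂ U]
    (d : ℕ) (hd : 1 ≤ d)
    (Γ : EuclideanSpace ℝ (Fin d) →ₗ[ℝ] (U →L[ℂ] U))
    (hcomm : ∀ X Y : EuclideanSpace ℝ (Fin d), Commute (Γ X) (Γ Y))
    (lam : EuclideanSpace ℝ (Fin d) →ₗ[ℝ] ℂ)
    (E : U →L[ℂ] U) (hE : IsIdempotentElem E)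
    (hEcomm : ∀ X : EuclideanSpace ℝ (Fin d), Commute E (Γ X))
    (hnil : ∀ X : EuclideanSpace ℝ (Fin d),
      IsNilpotent (E * (Γ X - lam X • (1 : U →L[ℂ] U))))
    (X Y a : EuclideanSpace ℝ (Fin d))
    (Φ : EuclideanSpace ℝ (Fin d) → U) (hΦ : Differentiable ℝ Φ)
    (ΨX ΨY : EuclideanSpace ℝ (Fin d) → U) (hΨXc : Continuous ΨX) (hΨYc : Continuous ΨY)
    (hodeX : ∀ b : EuclideanSpace ℝ (Fin d),
      deriv (fun s : ℝ => Φ (b + s • X)) 0 = Γ X (Φ b) + ΨX b)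
    (hodeY : ∀ b : EuclideanSpace ℝ (Fin d),
      deriv (fun s : ℝ => Φ (b + s • Y)) 0 = Γ Y (Φ b) + ΨY b)
    (C ε : ℝ) (hC : 0 < C) (hε : 0 < ε) (N : ℕ)
    (hbound : ∀ s ∈ Set.Icc (0:ℝ) 1, ∀ t ≥ (0:ℝ),
      ‖ΨX (a + s • X + t • Y)‖
        ≤ C * (1 + t) ^ N * Real.exp ((lam (s • X + t • Y)).re) * Real.exp (-ε * t) ∧
      ‖ΨY (a + s • X + t • Y)‖
        ≤ C * (1 + t) ^ N * Real.exp ((lam (s • X + t • Y)).re) * Real.exp (-ε * t)) :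
    ∃ v₀ v₁ : U,
      Tendsto (fun t : ℝ =>
          (NormedSpace.exp ((-t : ℂ) • Γ Y)) (E (Φ (a + t • Y)))) atTop (nhds v₀) ∧
      Tendsto (fun t : ℝ =>
          (NormedSpace.exp ((-t : ℂ) • Γ Y)) (E (Φ (a + X + t • Y)))) atTop (nhds v₁) ∧
      v₁ = (NormedSpace.exp (Γ X)) v₀ :=
  constant_term_limit_equivariance_general U d Γ hcomm lam E hE hEcomm hnil X Y a Φ hΦ ΨX ΨY hodeX
    hodeY C ε hC hε N hbound
end

section
/- Let k be a commutative ring, 𝔤 a Lie algebra over k, and 𝔟, 𝔥 ⊆ 𝔤 Lie subalgebras such that 𝔤 = 𝔟 + 𝔥 as k-modules. Let ι : 𝔤 → U(𝔤) be the canonical map, let B be the subalgebra of U(𝔤) generated by ι(𝔟), and let J = U(𝔤)·ι(𝔥) be the left ideal of U(𝔤) generated by ι(𝔥). Then U(𝔤) = B + J, i.e., every element of U(𝔤) is the sum of an element of B and an element of J. -/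
/-!
Filter `U(𝔤)` by the powers `Fₙ = (span ι(𝔤))ⁿ`, which exhaust `U(𝔤)`, and show `Fₙ ⊆ B + J` by
induction on `n`. Write `x ∈ 𝔤` as `x_b + x_h`. For `a ∈ Fₙ`, `ι(x_b) a ∈ B (B + J) ⊆ B + J`, and
`ι(x_h) a = a ι(x_h) + ⁅ι(x_h), a⁆` with `a ι(x_h) ∈ J`, while `⁅ι(x_h), a⁆ ∈ Fₙ` because the
derivation `ad ι(x_h)` preserves `F₁`.
-/

attribute [local instance 100] LieRing.ofAssociativeRing

section

variable {R A : Type*} [CommSemiring R] [Ring A] [Algebra R A]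

theorem Submodule.lie_mem_pow {V : Submodule R A} {a : A} (ha : ∀ v ∈ V, ⁅a, v⁆ ∈ V)
    {n : ℕ} {m : A} (hm : m ∈ V ^ n) : ⁅a, m⁆ ∈ V ^ n := by
  induction hm using Submodule.pow_induction_on_left' with
  | algebraMap r => rw [Ring.lie_def, ← Algebra.commutes, sub_self]; exact zero_mem _
  | add x y i _ _ hx hy => rw [lie_add]; exact add_mem hx hy
  | mem_mul v hv i x hx ih =>
    have leibniz : ⁅a, v * x⁆ = ⁅a, v⁆ * x + v * ⁅a, x⁆ := by
      simp only [Ring.lie_def, mul_sub, sub_mul, mul_assoc]; abel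
    rw [leibniz, pow_succ']
    exact add_mem (Submodule.mul_mem_mul (ha v hv) hx) (Submodule.mul_mem_mul hv ih)

theorem Algebra.toSubmodule_adjoin_le_of_span_pow_le {s : Set A} {M : Submodule R A}
    (h : ∀ n, Submodule.span R s ^ n ≤ M) : Subalgebra.toSubmodule (Algebra.adjoin R s) ≤ M := by
  rw [Algebra.adjoin_eq_span, Submodule.span_le]
  intro z hz
  suffices ∃ n, z ∈ Submodule.span R s ^ n from this.elim fun n hn => h n hn
  induction hz using Submonoid.closure_induction with
  | mem x hx => exact ⟨1, by simpa using Submodule.subset_span hx⟩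
  | one => exact ⟨0, by rw [pow_zero]; exact Submodule.mem_one.mpr ⟨1, map_one _⟩⟩
  | mul x y _ _ hx hy =>
    obtain ⟨i, hi⟩ := hx
    obtain ⟨j, hj⟩ := hy
    exact ⟨i + j, pow_add (Submodule.span R s) i j ▸ Submodule.mul_mem_mul hi hj⟩

theorem Subalgebra.mul_mem_toSubmodule_sup {B : Subalgebra R A} {J : Submodule A A} {y a : A}
    (hy : y ∈ B) (ha : a ∈ Subalgebra.toSubmodule B ⊔ J.restrictScalars R) :
    y * a ∈ Subalgebra.toSubmodule B ⊔ J.restrictScalars R := by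
  obtain ⟨β, hβ, j, hj, rfl⟩ := Submodule.mem_sup.mp ha
  rw [mul_add]
  exact add_mem (Submodule.mem_sup_left (B.mul_mem hy hβ))
    (Submodule.mem_sup_right (J.smul_mem y hj))

end

namespace UniversalEnvelopingAlgebra

variable {k : Type*} [CommRing k] {g : Type*} [LieRing g] [LieAlgebra k g]

theorem adjoin_range_ι :
    Algebra.adjoin k (Set.range (ι k : g → UniversalEnvelopingAlgebra k g)) = ⊤ := by
  have hrange : Set.range (ι k : g → UniversalEnvelopingAlgebra k g) =
      mkAlgHom k g '' Set.range (TensorAlgebra.ι k (M := g)) := by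
    rw [← Set.range_comp]; rfl
  rw [hrange, ← AlgHom.map_adjoin, TensorAlgebra.adjoin_range_ι, Algebra.map_top,
    AlgHom.range_eq_top]
  exact RingCon.mkₐ_surjective (α := k) _

theorem lie_ι_mem_span_range_ι (x : g) {v : UniversalEnvelopingAlgebra k g}
    (hv : v ∈ Submodule.span k (Set.range (ι k))) :
    ⁅ι k x, v⁆ ∈ Submodule.span k (Set.range (ι k)) := by
  induction hv using Submodule.span_induction with
  | mem _ hy =>
    obtain ⟨y, rfl⟩ := hy
    exact Submodule.subset_span ⟨⁅x, y⁆, (ι k).map_lie x y⟩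
  | zero => rw [lie_zero]; exact zero_mem _
  | add _ _ _ _ hu hv => rw [lie_add]; exact add_mem hu hv
  | smul r _ _ hu => rw [lie_smul]; exact Submodule.smul_mem _ r hu

variable {b h : LieSubalgebra k g} {B : Subalgebra k (UniversalEnvelopingAlgebra k g)}
  {J : Ideal (UniversalEnvelopingAlgebra k g)}

theorem span_range_ι_pow_le_sup (hsum : (b : Submodule k g) ⊔ (h : Submodule k g) = ⊤)
    (hB : ∀ x ∈ b, ι k x ∈ B) (hJ : ∀ x ∈ h, ι k x ∈ J) (n : ℕ) :
    Submodule.span k (Set.range (ι k)) ^ n ≤ Subalgebra.toSubmodule B ⊔ J.restrictScalars k := by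
  set M := Subalgebra.toSubmodule B ⊔ J.restrictScalars k
  induction n with
  | zero =>
    rw [pow_zero, Submodule.one_eq_range]
    rintro _ ⟨r, rfl⟩
    exact Submodule.mem_sup_left (B.algebraMap_mem r)
  | succ n ih =>
    have ι_mul_mem : ∀ x : g, ∀ a ∈ Submodule.span k (Set.range (ι k)) ^ n, ι k x * a ∈ M := by
      intro x a ha
      obtain ⟨xb, hxb, xh, hxh, rfl⟩ := Submodule.mem_sup.mp (hsum ▸ Submodule.mem_top : x ∈ _)
      have commute : ι k xh * a = a * ι k xh + ⁅ι k xh, a⁆ := by rw [Ring.lie_def]; abel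
      rw [map_add, add_mul, commute]
      refine add_mem (B.mul_mem_toSubmodule_sup (hB xb hxb) (ih ha))
        (add_mem (Submodule.mem_sup_right (J.mul_mem_left a (hJ xh hxh))) (ih ?_))
      exact Submodule.lie_mem_pow (fun v hv => lie_ι_mem_span_range_ι xh hv) ha
    rw [pow_succ', Submodule.mul_le]
    intro v hv a ha
    have hspan : Submodule.span k (Set.range (ι k)) ≤ M.comap (LinearMap.mulRight k a) :=
      Submodule.span_le.mpr (Set.range_subset_iff.mpr fun x => ι_mul_mem x a ha)
    exact hspan hv

theorem toSubmodule_sup_restrictScalars_eq_top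
    (hsum : (b : Submodule k g) ⊔ (h : Submodule k g) = ⊤)
    (hB : ∀ x ∈ b, ι k x ∈ B) (hJ : ∀ x ∈ h, ι k x ∈ J) :
    Subalgebra.toSubmodule B ⊔ J.restrictScalars k = ⊤ := by
  refine top_unique ?_
  rw [← Algebra.top_toSubmodule, ← adjoin_range_ι]
  exact Algebra.toSubmodule_adjoin_le_of_span_pow_le (span_range_ι_pow_le_sup hsum hB hJ)

end UniversalEnvelopingAlgebra

/-- Poincaré–Birkhoff–Witt style decomposition: if `𝔤 = 𝔟 + 𝔥` as `k`-modules for Lie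
subalgebras `𝔟, 𝔥 ⊆ 𝔤`, `B` is the subalgebra of `U(𝔤)` generated by `ι(𝔟)` and
`J = U(𝔤)·ι(𝔥)` is the left ideal generated by `ι(𝔥)`, then `U(𝔤) = B + J`. -/
theorem enveloping_algebra_eq_subalgebra_add_left_ideal
    (k : Type*) [CommRing k] (g : Type*) [LieRing g] [LieAlgebra k g]
    (b h : LieSubalgebra k g)
    (hsum : (b : Submodule k g) ⊔ (h : Submodule k g) = ⊤) :
    let ι : g → UniversalEnvelopingAlgebra k g := ⇑(UniversalEnvelopingAlgebra.ι k)
    let B : Subalgebra k (UniversalEnvelopingAlgebra k g) := Algebra.adjoin k (ι '' (b : Set g))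
    let J : Ideal (UniversalEnvelopingAlgebra k g) := Ideal.span (ι '' (h : Set g))
    ∀ u : UniversalEnvelopingAlgebra k g, ∃ x ∈ B, ∃ y ∈ J, u = x + y := by
  intro ι B J u
  have hB : ∀ x ∈ b, ι x ∈ B := fun x hx => Algebra.subset_adjoin ⟨x, hx, rfl⟩
  have hJ : ∀ x ∈ h, ι x ∈ J := fun x hx => Ideal.subset_span ⟨x, hx, rfl⟩
  have hu : u ∈ Subalgebra.toSubmodule B ⊔ J.restrictScalars k := by
    rw [UniversalEnvelopingAlgebra.toSubmodule_sup_restrictScalars_eq_top hsum hB hJ]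
    exact Submodule.mem_top
  obtain ⟨x, hx, y, hy, rfl⟩ := Submodule.mem_sup.mp hu
  exact ⟨x, hx, y, hy, rfl⟩
end
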